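/- arXiv:2109.07502 — 6 statements merged into one kernel-verified Lean document; each statement's English description precedes it below -/
import Mathlib

section
/- The treatment diffusion bias satisfies the general formula b = E[Y0] − E[Y0 | Z' = 0, Z = 0] · (1 − ρ̄) − E[Y1 | Z' = 1, Z = 0] · ρ̄ + E[Y1 | Z = 1] − E[Y1]. -/
open MeasureTheory ProbabilityTheory

lemma integral_cond_eq_aux {Ω : Type*} [MeasurableSpace Ω] (μ : Measure Ω) (s : Set Ω)
    (f : Ω → ℝ) :
    ∫ ω, f ω ∂(μ[|s]) = (μ s).toReal⁻¹ * ∫ ω in s, f ω ∂μ := by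
  rw [ProbabilityTheory.cond, integral_smul_measure, ENNReal.toReal_inv, smul_eq_mul]

/-- General formula for the treatment diffusion bias:
b = E[Y0] − E[Y0 | Z' = 0, Z = 0]·(1 − ρ̄) − E[Y1 | Z' = 1, Z = 0]·ρ̄ + E[Y1 | Z = 1] − E[Y1]. -/
theorem diffusion_bias_general_formula
    {Ω : Type*} [MeasurableSpace Ω] (μ : Measure Ω) [IsProbabilityMeasure μ]
    (Z Z' : Ω → ℝ) (hZ : Measurable Z) (hZ' : Measurable Z')
    (hZ01 : ∀ ω, Z ω = 0 ∨ Z ω = 1) (hZ'01 : ∀ ω, Z' ω = 0 ∨ Z' ω = 1)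
    (Y0 Y1 Y : Ω → ℝ) (hY0 : Integrable Y0 μ) (hY1 : Integrable Y1 μ)
    (hY : ∀ ω, Y ω = Z' ω * Y1 ω + (1 - Z' ω) * Y0 ω)
    (hZpos : 0 < μ {ω | Z ω = 1}) (hZlt : μ {ω | Z ω = 1} < 1)
    (hmono : μ[|{ω | Z ω = 1}] {ω | Z' ω = 1} = 1)
    (ρ : ℝ) (hρ : ρ = (μ[|{ω | Z ω = 0}] {ω | Z' ω = 1}).toReal)
    (hρ0 : 0 < ρ) (hρ1 : ρ < 1)
    (τstar τnodiff b : ℝ)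
    (hτstar : τstar = ∫ ω, Y1 ω ∂μ - ∫ ω, Y0 ω ∂μ)
    (hτnodiff : τnodiff = ∫ ω, Y ω ∂(μ[|{ω | Z ω = 1}]) - ∫ ω, Y ω ∂(μ[|{ω | Z ω = 0}]))
    (hb : b = τnodiff - τstar) :
    b = ∫ ω, Y0 ω ∂μ
        - (∫ ω, Y0 ω ∂(μ[|{ω | Z' ω = 0 ∧ Z ω = 0}])) * (1 - ρ)
        - (∫ ω, Y1 ω ∂(μ[|{ω | Z' ω = 1 ∧ Z ω = 0}])) * ρ
        + ∫ ω, Y1 ω ∂(μ[|{ω | Z ω = 1}])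
        - ∫ ω, Y1 ω ∂μ := by
  -- sets
  set sA : Set Ω := {ω | Z ω = 1} with hsA
  set sB : Set Ω := {ω | Z ω = 0} with hsB
  set s1 : Set Ω := {ω | Z' ω = 1} with hs1
  set s0 : Set Ω := {ω | Z' ω = 0} with hs0
  have msB : MeasurableSet sB := hZ (measurableSet_singleton 0)
  have ms1 : MeasurableSet s1 := hZ' (measurableSet_singleton 1)
  have hs0c : s0 = s1ᶜ := by
    ext ω
    simp only [hs0, hs1, Set.mem_setOf_eq, Set.mem_compl_iff]
    constructor
    · intro h h1; rw [h] at h1; norm_num at h1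
    · intro h; rcases hZ'01 ω with h0 | h1; · exact h0
      · exact absurd h1 h
  -- Y equals Y1 on s1 and Y0 on s0
  have hY1eq : ∀ ω ∈ s1, Y ω = Y1 ω := by
    intro ω hω; rw [hY ω, hω]; ring
  have hY0eq : ∀ ω ∈ s0, Y ω = Y0 ω := by
    intro ω hω; rw [hY ω, hω]; ring
  -- Part 1 : E[Y | Z = 1] = E[Y1 | Z = 1]
  haveI : IsProbabilityMeasure (μ[|sA]) := cond_isProbabilityMeasure hZpos.ne'
  have hA : ∫ ω, Y ω ∂(μ[|sA]) = ∫ ω, Y1 ω ∂(μ[|sA]) := by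
    apply integral_congr_ae
    have hc : (μ[|sA]) s1ᶜ = 0 := by
      rw [measure_compl ms1 (measure_ne_top _ _), hmono]
      simp
    refine (ae_iff).2 (measure_mono_null ?_ hc)
    intro ω hω
    simp only [Set.mem_setOf_eq] at hω
    simp only [Set.mem_compl_iff, hs1, Set.mem_setOf_eq]
    intro h1
    exact hω (hY1eq ω h1)
  -- notation for real quantities
  set aB : ℝ := (μ sB).toReal with haB
  set p1 : ℝ := (μ (sB ∩ s1)).toReal with hp1
  set p0 : ℝ := (μ (sB ∩ s0)).toReal with hp0
  have hp1nn : 0 ≤ p1 := ENNReal.toReal_nonneg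
  have hp0nn : 0 ≤ p0 := ENNReal.toReal_nonneg
  -- ρ = p1 / aB
  have hρ' : ρ = aB⁻¹ * p1 := by
    rw [hρ, cond_apply msB μ s1, ENNReal.toReal_mul, ENNReal.toReal_inv]
  have haB0 : aB ≠ 0 := by
    intro h; rw [h, inv_zero, zero_mul] at hρ'; exact absurd hρ' hρ0.ne'
  have hp10 : p1 ≠ 0 := by
    intro h; rw [h, mul_zero] at hρ'; exact absurd hρ' hρ0.ne'
  -- aB = p1 + p0
  have hsum : aB = p1 + p0 := by
    have := measure_inter_add_diff sB ms1 (μ := μ)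
    rw [Set.diff_eq, ← hs0c] at this
    rw [haB, ← this, ENNReal.toReal_add (measure_ne_top _ _) (measure_ne_top _ _)]
  -- 1 - ρ = p0 / aB
  have h1ρ : 1 - ρ = aB⁻¹ * p0 := by
    rw [hρ']; field_simp; linarith [hsum]
  have hp00 : p0 ≠ 0 := by
    intro h; rw [h, mul_zero, sub_eq_zero] at h1ρ
    exact absurd h1ρ.symm hρ1.ne
  -- split the integral of Y over sB
  have hInt1 : IntegrableOn Y (sB ∩ s1) μ :=
    (hY1.integrableOn).congr_fun (fun ω hω => (hY1eq ω hω.2).symm) (msB.inter ms1)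
  have hInt0 : IntegrableOn Y (sB ∩ s1ᶜ) μ :=
    (hY0.integrableOn).congr_fun
      (fun ω hω => (hY0eq ω (hs0c ▸ hω.2)).symm) (msB.inter ms1.compl)
  have hBsplit : ∫ ω in sB, Y ω ∂μ
      = (∫ ω in sB ∩ s1, Y1 ω ∂μ) + (∫ ω in sB ∩ s0, Y0 ω ∂μ) := by
    have hun : sB = (sB ∩ s1) ∪ (sB ∩ s1ᶜ) := (Set.inter_union_compl sB s1).symm
    rw [hs0c]
    calc ∫ ω in sB, Y ω ∂μ = ∫ ω in (sB ∩ s1) ∪ (sB ∩ s1ᶜ), Y ω ∂μ := by rw [← hun]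
      _ = (∫ ω in sB ∩ s1, Y ω ∂μ) + (∫ ω in sB ∩ s1ᶜ, Y ω ∂μ) :=
          setIntegral_union (Set.disjoint_of_subset_left Set.inter_subset_right
            (Set.disjoint_of_subset_right Set.inter_subset_right disjoint_compl_right))
            (msB.inter ms1.compl) hInt1 hInt0
      _ = (∫ ω in sB ∩ s1, Y1 ω ∂μ) + (∫ ω in sB ∩ s1ᶜ, Y0 ω ∂μ) := by
          rw [setIntegral_congr_fun (msB.inter ms1) (fun ω hω => hY1eq ω hω.2),
            setIntegral_congr_fun (msB.inter ms1.compl)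
              (fun ω hω => hY0eq ω (hs0c ▸ hω.2))]
  -- rewrite all conditional integrals
  have e1 : {ω | Z' ω = 1 ∧ Z ω = 0} = s1 ∩ sB := rfl
  have e0 : {ω | Z' ω = 0 ∧ Z ω = 0} = s0 ∩ sB := rfl
  have key1 : (∫ ω, Y1 ω ∂(μ[|{ω | Z' ω = 1 ∧ Z ω = 0}])) * ρ
      = aB⁻¹ * ∫ ω in sB ∩ s1, Y1 ω ∂μ := by
    rw [e1, integral_cond_eq_aux, Set.inter_comm s1 sB, hρ', ← hp1]
    field_simp
  have key0 : (∫ ω, Y0 ω ∂(μ[|{ω | Z' ω = 0 ∧ Z ω = 0}])) * (1 - ρ)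
      = aB⁻¹ * ∫ ω in sB ∩ s0, Y0 ω ∂μ := by
    rw [e0, integral_cond_eq_aux, Set.inter_comm s0 sB, h1ρ, ← hp0]
    field_simp
  have hB : ∫ ω, Y ω ∂(μ[|sB]) = aB⁻¹ * ((∫ ω in sB ∩ s1, Y1 ω ∂μ)
      + (∫ ω in sB ∩ s0, Y0 ω ∂μ)) := by
    rw [integral_cond_eq_aux, hBsplit]
  rw [hb, hτnodiff, hτstar, hA, hB, key1, key0]
  ring
end

section
/- Overestimation direction of the diffusion bias: if in addition E[Y1 | Z = 1] = E[Y1], E[Y0] = 0, E[Y0 | Z' = 0, Z = 0] = 0, and E[Y1 | Z' = 1, Z = 0] < 0, then b > 0, i.e. the naive no-diffusion contrast overestimates the post-diffusion average treatment effect. -/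
open MeasureTheory ProbabilityTheory

lemma setIntegral_eq_cond' {Ω : Type*} [MeasurableSpace Ω] (μ : Measure Ω) [IsFiniteMeasure μ]
    (s : Set Ω) (f : Ω → ℝ) :
    ∫ ω in s, f ω ∂μ = (μ s).toReal * ∫ ω, f ω ∂(μ[|s]) := by
  rw [ProbabilityTheory.cond, integral_smul_measure]
  by_cases h : μ s = 0
  · simp [Measure.restrict_eq_zero.mpr h, h]
  · rw [ENNReal.toReal_inv, smul_eq_mul, ← mul_assoc,
      mul_inv_cancel₀ (ENNReal.toReal_ne_zero.mpr ⟨h, measure_ne_top μ s⟩), one_mul]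

/-- Overestimation direction of the diffusion bias: if E[Y1 | Z = 1] = E[Y1], E[Y0] = 0,
E[Y0 | Z' = 0, Z = 0] = 0 and E[Y1 | Z' = 1, Z = 0] < 0, then b > 0. -/
theorem diffusion_bias_overestimation
    {Ω : Type*} [MeasurableSpace Ω] (μ : Measure Ω) [IsProbabilityMeasure μ]
    (Z Z' : Ω → ℝ) (hZ : Measurable Z) (hZ' : Measurable Z')
    (hZ01 : ∀ ω, Z ω = 0 ∨ Z ω = 1) (hZ'01 : ∀ ω, Z' ω = 0 ∨ Z' ω = 1)
    (Y0 Y1 Y : Ω → ℝ) (hY0 : Integrable Y0 μ) (hY1 : Integrable Y1 μ)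
    (hY : ∀ ω, Y ω = Z' ω * Y1 ω + (1 - Z' ω) * Y0 ω)
    (hZpos : 0 < μ {ω | Z ω = 1}) (hZlt : μ {ω | Z ω = 1} < 1)
    (hmono : μ[|{ω | Z ω = 1}] {ω | Z' ω = 1} = 1)
    (ρ : ℝ) (hρ : ρ = (μ[|{ω | Z ω = 0}] {ω | Z' ω = 1}).toReal)
    (hρ0 : 0 < ρ) (hρ1 : ρ < 1)
    (τstar τnodiff b : ℝ)
    (hτstar : τstar = ∫ ω, Y1 ω ∂μ - ∫ ω, Y0 ω ∂μ)
    (hτnodiff : τnodiff = ∫ ω, Y ω ∂(μ[|{ω | Z ω = 1}]) - ∫ ω, Y ω ∂(μ[|{ω | Z ω = 0}]))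
    (hb : b = τnodiff - τstar)
    (hrand : ∫ ω, Y1 ω ∂(μ[|{ω | Z ω = 1}]) = ∫ ω, Y1 ω ∂μ)
    (hY0zero : ∫ ω, Y0 ω ∂μ = 0)
    (hY0condzero : ∫ ω, Y0 ω ∂(μ[|{ω | Z' ω = 0 ∧ Z ω = 0}]) = 0)
    (hY1neg : ∫ ω, Y1 ω ∂(μ[|{ω | Z' ω = 1 ∧ Z ω = 0}]) < 0) :
    0 < b := by
  set A1 : Set Ω := {ω | Z ω = 1} with hA1def
  set A0 : Set Ω := {ω | Z ω = 0} with hA0def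
  set S1 : Set Ω := {ω | Z' ω = 1} with hS1def
  set B1 : Set Ω := {ω | Z' ω = 1 ∧ Z ω = 0} with hB1def
  set B0 : Set Ω := {ω | Z' ω = 0 ∧ Z ω = 0} with hB0def
  have hmA1 : MeasurableSet A1 := hZ (measurableSet_singleton 1)
  have hmA0 : MeasurableSet A0 := hZ (measurableSet_singleton 0)
  have hmS1 : MeasurableSet S1 := hZ' (measurableSet_singleton 1)
  have hmB1 : MeasurableSet B1 := (hZ' (measurableSet_singleton 1)).inter hmA0
  have hmB0 : MeasurableSet B0 := (hZ' (measurableSet_singleton 0)).inter hmA0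
  -- Y is integrable
  have hYint : Integrable Y μ := by
    have h1 : Integrable (fun ω => Z' ω * Y1 ω) μ :=
      hY1.bdd_mul hZ'.aestronglyMeasurable
        (c := 1) (Filter.Eventually.of_forall fun ω => by rcases hZ'01 ω with h | h <;> simp [h])
    have h2 : Integrable (fun ω => (1 - Z' ω) * Y0 ω) μ :=
      hY0.bdd_mul (measurable_const.sub hZ').aestronglyMeasurable
        (c := 1) (Filter.Eventually.of_forall fun ω => by rcases hZ'01 ω with h | h <;> simp [h])
    exact (h1.add h2).congr (Filter.Eventually.of_forall fun ω => (hY ω).symm)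
  -- μ A0 is positive
  have hA0compl : A0 = A1ᶜ := by
    ext ω; rcases hZ01 ω with h | h <;> simp [hA0def, hA1def, h]
  have hμA0 : μ A0 = 1 - μ A1 := by
    rw [hA0compl, measure_compl hmA1 (measure_ne_top μ A1), measure_univ]
  have hμA0ne : μ A0 ≠ 0 := by
    rw [hμA0]
    simpa [tsub_eq_zero_iff_le] using hZlt.not_ge
  have hm0pos : 0 < (μ A0).toReal :=
    ENNReal.toReal_pos hμA0ne (measure_ne_top μ A0)
  -- Step 1 : conditional on A1, Y = Y1 a.e.
  have hcondP1 : IsProbabilityMeasure (μ[|A1]) :=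
    cond_isProbabilityMeasure hZpos.ne'
  have haeZ' : ∀ᵐ ω ∂(μ[|A1]), Z' ω = 1 := by
    have hc : (μ[|A1]) S1ᶜ = 0 := by
      rw [measure_compl hmS1 (measure_ne_top _ _), hmono, measure_univ, tsub_self]
    have hcs : S1ᶜ = {ω | ¬ Z' ω = 1} := by ext ω; simp [hS1def]
    rw [ae_iff, ← hcs]; exact hc
  have hstep1 : ∫ ω, Y ω ∂(μ[|A1]) = ∫ ω, Y1 ω ∂μ := by
    rw [← hrand]
    refine integral_congr_ae (haeZ'.mono fun ω h => ?_)
    rw [hY ω, h]; ring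
  -- Step 2 : decompose the integral over A0
  have hB1eq : B1 = S1 ∩ A0 := rfl
  have hA0union : A0 = B1 ∪ B0 := by
    ext ω
    rcases hZ'01 ω with h | h <;>
      simp [hA0def, hB1def, hB0def, h]
  have hdisj : Disjoint B1 B0 := by
    rw [Set.disjoint_left]
    rintro ω ⟨h1, -⟩ ⟨h0, -⟩
    rw [h1] at h0; norm_num at h0
  have hsplit : ∫ ω in A0, Y ω ∂μ = ∫ ω in B1, Y ω ∂μ + ∫ ω in B0, Y ω ∂μ := by
    rw [hA0union, setIntegral_union hdisj hmB0 hYint.integrableOn hYint.integrableOn]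
  have hB1Y : ∫ ω in B1, Y ω ∂μ = ∫ ω in B1, Y1 ω ∂μ :=
    setIntegral_congr_fun hmB1 (fun ω hω => by rw [hY ω, hω.1]; ring)
  have hB0Y : ∫ ω in B0, Y ω ∂μ = ∫ ω in B0, Y0 ω ∂μ :=
    setIntegral_congr_fun hmB0 (fun ω hω => by rw [hY ω, hω.1]; ring)
  -- relate ρ to measures
  have hρm : (μ B1).toReal = ρ * (μ A0).toReal := by
    rw [hρ, cond_apply hmA0, ← Set.inter_comm S1 A0, ← hB1eq, ENNReal.toReal_mul,
      ENNReal.toReal_inv]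
    field_simp
  -- conditional integral over A0
  have hstep2 : ∫ ω, Y ω ∂(μ[|A0]) = ρ * ∫ ω, Y1 ω ∂(μ[|B1]) := by
    have hA0int : ∫ ω in A0, Y ω ∂μ = (μ A0).toReal * ∫ ω, Y ω ∂(μ[|A0]) :=
      setIntegral_eq_cond' μ A0 Y
    have hB1int : ∫ ω in B1, Y1 ω ∂μ = (μ B1).toReal * ∫ ω, Y1 ω ∂(μ[|B1]) :=
      setIntegral_eq_cond' μ B1 Y1
    have hB0int : ∫ ω in B0, Y0 ω ∂μ = (μ B0).toReal * ∫ ω, Y0 ω ∂(μ[|B0]) :=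
      setIntegral_eq_cond' μ B0 Y0
    have h0 : ∫ ω in B0, Y0 ω ∂μ = 0 := by rw [hB0int, hY0condzero, mul_zero]
    have key : (μ A0).toReal * ∫ ω, Y ω ∂(μ[|A0])
        = (μ A0).toReal * (ρ * ∫ ω, Y1 ω ∂(μ[|B1])) := by
      rw [← hA0int, hsplit, hB1Y, hB0Y, h0, add_zero, hB1int, hρm]; ring
    exact mul_left_cancel₀ hm0pos.ne' key
  rw [hb, hτnodiff, hτstar, hY0zero, hstep1, hstep2]
  have : ρ * ∫ ω, Y1 ω ∂(μ[|B1]) < 0 := mul_neg_of_pos_of_neg hρ0 hY1neg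
  linarith
end

section
/- If under ν = μ(·|{Z = 0}) the random variables Y0 and Z' are conditionally independent given the σ-algebra generated by W, and ν[Y0 | σ(W)] = E_μ[Y0] ν-almost surely, then E[Y0 | Z' = 0, Z = 0] = E_μ[Y0]. (This is the paper's Appendix A identity E[Y(0) | Z_{t'} = 0, Z_t = 0] = E[Y(0)] under the unconfoundedness assumption.) -/
open MeasureTheory ProbabilityTheory Set Filter
open scoped NNReal ENNReal

section Aux

variable {Ω : Type*} {m : MeasurableSpace Ω} [mΩ : MeasurableSpace Ω] [StandardBorelSpace Ω]
  [Nonempty Ω]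

lemma condIndepFun_congr_left' (hm : m ≤ mΩ)
    {ν : Measure Ω} [IsFiniteMeasure ν] {β γ : Type*} [MeasurableSpace β] [MeasurableSpace γ]
    {f f' : Ω → β} {g : Ω → γ} (hff' : f =ᵐ[ν] f')
    (h : CondIndepFun m hm f g ν) : CondIndepFun m hm f' g ν := by
  obtain ⟨N, hNsub, hNmeas, hN0⟩ := exists_measurable_superset_of_null (ae_iff.mp hff')
  have hk : ∀ᵐ ω ∂(ν.trim hm), condExpKernel ν m ω N = 0 := by
    have h1 : (fun ω => (condExpKernel ν m ω N).toReal) =ᵐ[ν] ν⟦N | m⟧ :=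
      condExpKernel_ae_eq_condExp hm hNmeas
    have h2 : (ν⟦N | m⟧) =ᵐ[ν] 0 := by
      have hind : N.indicator (fun _ => (1 : ℝ)) =ᵐ[ν] 0 := by
        filter_upwards [measure_eq_zero_iff_ae_notMem.mp hN0] with x hx
        simp [Set.indicator_of_notMem hx]
      calc (ν⟦N | m⟧) =ᵐ[ν] ν[(0 : Ω → ℝ) | m] := condExp_congr_ae hind
        _ = 0 := condExp_zero
    have h3 : ∀ᵐ ω ∂ν, condExpKernel ν m ω N = 0 := by
      filter_upwards [h1.trans h2] with ω hω
      have hne : condExpKernel ν m ω N ≠ ⊤ := measure_ne_top _ _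
      simpa [Pi.zero_apply, ENNReal.toReal_eq_zero_iff, hne] using hω
    have hSm : MeasurableSet[m] {ω | ¬ condExpKernel ν m ω N = 0} :=
      (measurable_condExpKernel (μ := ν) hNmeas) (measurableSet_singleton (0 : ENNReal)).compl
    rw [ae_iff, trim_measurableSet_eq hm hSm]
    exact ae_iff.mp h3
  rintro t1 t2 ⟨s, hs, rfl⟩ ht2
  filter_upwards [h (f ⁻¹' s) t2 ⟨s, hs, rfl⟩ ht2, hk] with ω hω hωN
  have hsub : ∀ u : Set Ω, symmDiff (f' ⁻¹' s ∩ u) (f ⁻¹' s ∩ u) ⊆ N := by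
    intro u x hx
    rcases hx with hx | hx
    · refine hNsub fun hfx => hx.2 ⟨?_, hx.1.2⟩
      have h11 := hx.1.1
      simp only [Set.mem_preimage] at h11 ⊢
      rwa [hfx]
    · refine hNsub fun hfx => hx.2 ⟨?_, hx.1.2⟩
      have h11 := hx.1.1
      simp only [Set.mem_preimage] at h11 ⊢
      rwa [← hfx]
  have key : ∀ u : Set Ω,
      condExpKernel ν m ω (f' ⁻¹' s ∩ u) = condExpKernel ν m ω (f ⁻¹' s ∩ u) := by
    intro u
    refine measure_congr (measure_symmDiff_eq_zero_iff.mp ?_)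
    exact le_antisymm (hωN ▸ measure_mono (hsub u)) zero_le
  have key2 : condExpKernel ν m ω (f' ⁻¹' s) = condExpKernel ν m ω (f ⁻¹' s) := by
    have := key Set.univ
    simpa using this
  rw [key, key2, hω]

omit [StandardBorelSpace Ω] [Nonempty Ω] in
lemma key_setIntegral (hm : m ≤ mΩ) (ν : Measure Ω) [IsProbabilityMeasure ν]
    {Y : Ω → ℝ} (hYm : Measurable Y) (hYi : Integrable Y ν)
    {B : Set Ω} (hB : MeasurableSet B)
    (hfac : ∀ s : Set ℝ, MeasurableSet s →
      (ν⟦Y ⁻¹' s ∩ B | m⟧) =ᵐ[ν] fun ω => (ν⟦Y ⁻¹' s | m⟧) ω * (ν⟦B | m⟧) ω)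
    {c : ℝ} (hCE : ν[Y | m] =ᵐ[ν] fun _ => c) :
    ∫ ω in B, Y ω ∂ν = (ν B).toReal * c := by
  set g : Ω → ℝ := ν⟦B | m⟧ with hg
  have hg_meas : StronglyMeasurable[m] g := stronglyMeasurable_condExp
  have hg_int : Integrable g ν := integrable_condExp
  have hg_nonneg : 0 ≤ᵐ[ν] g :=
    condExp_nonneg (Eventually.of_forall fun ω => Set.indicator_nonneg (fun _ _ => zero_le_one) ω)
  have hg_le_one : ∀ᵐ ω ∂ν, g ω ≤ 1 := by
    have h1 : ν[fun _ => (1 : ℝ) | m] = fun _ => (1 : ℝ) := condExp_const hm 1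
    have := condExp_mono (μ := ν) (m := m)
      (integrable_indicator_iff hB |>.mpr (integrable_const (1:ℝ)).integrableOn)
      (integrable_const (1 : ℝ))
      (Eventually.of_forall fun ω => Set.indicator_le_self' (fun _ _ => zero_le_one) ω)
    filter_upwards [this] with ω hω
    simpa [h1] using hω
  have hg_bound : ∀ᵐ ω ∂ν, ‖g ω‖ ≤ 1 := by
    filter_upwards [hg_nonneg, hg_le_one] with ω h0 h1
    simp only [Pi.zero_apply] at h0
    rw [Real.norm_eq_abs, abs_le]
    exact ⟨by linarith, h1⟩
  have hint_ind : ∀ {A : Set Ω}, MeasurableSet A →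
      Integrable (A.indicator fun _ => (1:ℝ)) ν := fun hA =>
    (integrable_indicator_iff hA).mpr (integrable_const (1:ℝ)).integrableOn
  have hintegral_ind : ∀ {A : Set Ω}, MeasurableSet A →
      ∫ ω, A.indicator (fun _ => (1:ℝ)) ω ∂ν = (ν A).toReal := by
    intro A hA
    rw [integral_indicator hA, setIntegral_const, smul_eq_mul, mul_one, measureReal_def]
  have step1r : ∀ s : Set ℝ, MeasurableSet s →
      (ν (Y ⁻¹' s ∩ B)).toReal = ∫ ω in Y ⁻¹' s, g ω ∂ν := by
    intro s hs
    have hA : MeasurableSet (Y ⁻¹' s) := hYm hs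
    have hAB : MeasurableSet (Y ⁻¹' s ∩ B) := hA.inter hB
    have e3 : ν[fun ω => g ω * (Y ⁻¹' s).indicator (fun _ => (1:ℝ)) ω | m]
        =ᵐ[ν] fun ω => g ω * (ν⟦Y ⁻¹' s | m⟧) ω :=
      condExp_stronglyMeasurable_mul_of_bound hm hg_meas (hint_ind hA) 1 hg_bound
    calc (ν (Y ⁻¹' s ∩ B)).toReal
        = ∫ ω, (Y ⁻¹' s ∩ B).indicator (fun _ => (1:ℝ)) ω ∂ν := (hintegral_ind hAB).symm
      _ = ∫ ω, (ν⟦Y ⁻¹' s ∩ B | m⟧) ω ∂ν := (integral_condExp hm).symm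
      _ = ∫ ω, (ν⟦Y ⁻¹' s | m⟧) ω * g ω ∂ν := integral_congr_ae (hfac s hs)
      _ = ∫ ω, g ω * (ν⟦Y ⁻¹' s | m⟧) ω ∂ν := by
          exact integral_congr_ae (Eventually.of_forall fun ω => mul_comm _ _)
      _ = ∫ ω, (ν[fun ω => g ω * (Y ⁻¹' s).indicator (fun _ => (1:ℝ)) ω | m]) ω ∂ν :=
          (integral_congr_ae e3).symm
      _ = ∫ ω, g ω * (Y ⁻¹' s).indicator (fun _ => (1:ℝ)) ω ∂ν := integral_condExp hm
      _ = ∫ ω in Y ⁻¹' s, g ω ∂ν := by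
          rw [← integral_indicator hA]
          refine integral_congr_ae (Eventually.of_forall fun ω => ?_)
          by_cases hω : ω ∈ Y ⁻¹' s <;> simp [hω]
  have hg_lint_ne_top : ∀ {A : Set Ω}, (∫⁻ ω in A, ENNReal.ofReal (g ω) ∂ν) ≠ ⊤ := by
    intro A
    refine ne_top_of_le_ne_top ?_ (lintegral_mono_set (Set.subset_univ A))
    rw [Measure.restrict_univ]
    have : (∫⁻ ω, ENNReal.ofReal (g ω) ∂ν) ≤ ∫⁻ ω, ‖g ω‖₊ ∂ν := by
      refine lintegral_mono fun ω => ?_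
      change _ ≤ ‖g ω‖ₑ
      rw [← ofReal_norm]
      exact ENNReal.ofReal_le_ofReal (le_abs_self _)
    exact (this.trans_lt hg_int.2).ne
  have step1 : ∀ s : Set ℝ, MeasurableSet s →
      ν (Y ⁻¹' s ∩ B) = ∫⁻ ω in Y ⁻¹' s, ENNReal.ofReal (g ω) ∂ν := by
    intro s hs
    have hA : MeasurableSet (Y ⁻¹' s) := hYm hs
    have hreal : ∫ ω in Y ⁻¹' s, g ω ∂ν
        = (∫⁻ ω in Y ⁻¹' s, ENNReal.ofReal (g ω) ∂ν).toReal := by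
      rw [integral_eq_lintegral_of_nonneg_ae (ae_restrict_of_ae hg_nonneg)
        (hg_meas.mono hm).aestronglyMeasurable.restrict]
    refine (ENNReal.toReal_eq_toReal_iff' (measure_ne_top ν _) hg_lint_ne_top).mp ?_
    rw [step1r s hs, hreal]
  have hgNN : Measurable fun ω => Real.toNNReal (g ω) :=
    measurable_real_toNNReal.comp ((hg_meas.mono hm).measurable)
  have hmap : Measure.map Y (ν.restrict B)
      = Measure.map Y (ν.withDensity fun ω => ENNReal.ofReal (g ω)) := by
    refine Measure.ext fun s hs => ?_
    rw [Measure.map_apply hYm hs, Measure.map_apply hYm hs, Measure.restrict_apply (hYm hs),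
      withDensity_apply _ (hYm hs)]
    exact step1 s hs
  have hfinal : ∫ ω in B, Y ω ∂ν = ∫ ω, g ω * Y ω ∂ν := by
    have h1 : ∫ ω in B, Y ω ∂ν = ∫ y, y ∂(Measure.map Y (ν.restrict B)) :=
      (integral_map hYm.aemeasurable aestronglyMeasurable_id).symm
    have h2 : ∫ y, y ∂(Measure.map Y (ν.withDensity fun ω => ENNReal.ofReal (g ω)))
        = ∫ ω, Y ω ∂(ν.withDensity fun ω => ENNReal.ofReal (g ω)) :=
      integral_map hYm.aemeasurable aestronglyMeasurable_id
    have h3 : ∫ ω, Y ω ∂(ν.withDensity fun ω => ENNReal.ofReal (g ω))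
        = ∫ ω, Real.toNNReal (g ω) • Y ω ∂ν := by
      have heq : (fun ω => ENNReal.ofReal (g ω))
          = fun ω => ((Real.toNNReal (g ω) : ℝ≥0) : ℝ≥0∞) := rfl
      rw [heq, integral_withDensity_eq_integral_smul hgNN]
    have h4 : ∫ ω, Real.toNNReal (g ω) • Y ω ∂ν = ∫ ω, g ω * Y ω ∂ν := by
      refine integral_congr_ae ?_
      filter_upwards [hg_nonneg] with ω h0
      simp only [Pi.zero_apply] at h0
      simp [NNReal.smul_def, Real.coe_toNNReal _ h0]
    rw [h1, hmap, h2, h3, h4]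
  have h5 : ν[fun ω => g ω * Y ω | m] =ᵐ[ν] fun ω => g ω * (ν[Y | m]) ω :=
    condExp_stronglyMeasurable_mul_of_bound hm hg_meas hYi 1 hg_bound
  have h6 : ∫ ω, g ω * Y ω ∂ν = ∫ ω, g ω * c ∂ν := by
    calc ∫ ω, g ω * Y ω ∂ν = ∫ ω, (ν[fun ω => g ω * Y ω | m]) ω ∂ν := (integral_condExp hm).symm
      _ = ∫ ω, g ω * c ∂ν := by
          refine integral_congr_ae (h5.trans ?_)
          filter_upwards [hCE] with ω hω
          rw [hω]
  have h7 : ∫ ω, g ω * c ∂ν = (ν B).toReal * c := by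
    rw [integral_mul_const]
    congr 1
    calc ∫ ω, g ω ∂ν = ∫ ω, B.indicator (fun _ => (1:ℝ)) ω ∂ν := integral_condExp hm
      _ = (ν B).toReal := hintegral_ind hB
  rw [hfinal, h6, h7]

end Aux

/-- Appendix A identity: under conditional independence of Y0 and Z' given σ(W) under
ν = μ(·|Z=0), and ν[Y0 | σ(W)] = E_μ[Y0] ν-a.s., one has E[Y0 | Z' = 0, Z = 0] = E_μ[Y0]. -/
theorem cond_mean_Y0_given_untreated
    {Ω : Type*} [MeasurableSpace Ω] [StandardBorelSpace Ω] [Nonempty Ω]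
    (μ : Measure Ω) [IsProbabilityMeasure μ]
    {𝒲 : Type*} [MeasurableSpace 𝒲] [StandardBorelSpace 𝒲]
    (W : Ω → 𝒲) (hW : Measurable W)
    (Z Z' : Ω → ℝ) (hZ : Measurable Z) (hZ' : Measurable Z')
    (hZ01 : ∀ ω, Z ω = 0 ∨ Z ω = 1) (hZ'01 : ∀ ω, Z' ω = 0 ∨ Z' ω = 1)
    (Y0 Y1 : Ω → ℝ) (hY0 : Integrable Y0 μ) (hY1 : Integrable Y1 μ)
    (hZpos : 0 < μ {ω | Z ω = 1}) (hZlt : μ {ω | Z ω = 1} < 1)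
    (hmono : μ[|{ω | Z ω = 1}] {ω | Z' ω = 1} = 1)
    (ρ : ℝ) (hρ : ρ = (μ[|{ω | Z ω = 0}] {ω | Z' ω = 1}).toReal)
    (hρ0 : 0 < ρ) (hρ1 : ρ < 1)
    (hCI : CondIndepFun (MeasurableSpace.comap W inferInstance) hW.comap_le Y0 Z'
      (μ[|{ω | Z ω = 0}]))
    (hCE : (μ[|{ω | Z ω = 0}])[Y0 | MeasurableSpace.comap W inferInstance]
      =ᵐ[μ[|{ω | Z ω = 0}]] fun _ => ∫ ω, Y0 ω ∂μ) :
    ∫ ω, Y0 ω ∂(μ[|{ω | Z' ω = 0 ∧ Z ω = 0}]) = ∫ ω, Y0 ω ∂μ := by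
  have hm := hW.comap_le
  set ν : Measure Ω := μ[|{ω | Z ω = 0}] with hνdef
  set c : ℝ := ∫ ω, Y0 ω ∂μ with hcdef
  -- measurability of basic sets
  have hZ0meas : MeasurableSet {ω | Z ω = 0} := hZ (measurableSet_singleton 0)
  have hZ1meas : MeasurableSet {ω | Z ω = 1} := hZ (measurableSet_singleton 1)
  have hZ'1meas : MeasurableSet {ω | Z' ω = 1} := hZ' (measurableSet_singleton 1)
  set B : Set Ω := Z' ⁻¹' {0} with hBdef
  have hBmeas : MeasurableSet B := hZ' (measurableSet_singleton 0)
  -- μ {Z = 0} ≠ 0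
  have hsZ : {ω | Z ω = 0} = {ω | Z ω = 1}ᶜ := by
    ext ω
    simp only [Set.mem_setOf_eq, Set.mem_compl_iff]
    constructor
    · intro h h1
      rw [h] at h1
      norm_num at h1
    · intro h
      exact (hZ01 ω).resolve_right h
  have hμZ0 : μ {ω | Z ω = 0} ≠ 0 := by
    rw [hsZ, prob_compl_eq_one_sub hZ1meas]
    intro h
    exact hZlt.not_ge (tsub_eq_zero_iff_le.mp h)
  haveI : IsProbabilityMeasure ν := cond_isProbabilityMeasure hμZ0
  -- ν B ≠ 0
  have hB' : B = {ω | Z' ω = 1}ᶜ := by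
    ext ω
    simp only [hBdef, Set.mem_preimage, Set.mem_singleton_iff, Set.mem_setOf_eq,
      Set.mem_compl_iff]
    constructor
    · intro h h1
      rw [h] at h1
      norm_num at h1
    · intro h
      exact (hZ'01 ω).resolve_right h
  have hν1ne1 : ν {ω | Z' ω = 1} ≠ 1 := by
    intro h
    rw [hρ, h] at hρ0 hρ1
    simp at hρ1
  have hνB0 : ν B ≠ 0 := by
    rw [hB', prob_compl_eq_one_sub hZ'1meas]
    intro h
    exact hν1ne1 (le_antisymm prob_le_one (tsub_eq_zero_iff_le.mp h))
  have hνBReal : (ν B).toReal ≠ 0 :=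
    ENNReal.toReal_ne_zero.mpr ⟨hνB0, measure_ne_top ν B⟩
  -- measurable version of Y0
  set Y : Ω → ℝ := hY0.1.mk Y0 with hYdef
  have hYm : Measurable Y := hY0.1.measurable_mk
  have hae_μ : Y0 =ᵐ[μ] Y := hY0.1.ae_eq_mk
  have hνle : ν ≪ μ := cond_absolutelyContinuous
  have hae_ν : Y0 =ᵐ[ν] Y := hae_μ.filter_mono hνle.ae_le
  have hY0ν : Integrable Y0 ν := by
    have hrfl : ν = (μ {ω | Z ω = 0})⁻¹ • μ.restrict {ω | Z ω = 0} := rfl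
    rw [hrfl]
    exact (hY0.restrict).smul_measure (ENNReal.inv_ne_top.mpr hμZ0)
  have hYν : Integrable Y ν := hY0ν.congr hae_ν
  -- transfer CI and CE hypotheses
  have hCI' : CondIndepFun (MeasurableSpace.comap W inferInstance) hm Y Z' ν :=
    condIndepFun_congr_left' hm hae_ν hCI
  have hCE' : ν[Y | MeasurableSpace.comap W inferInstance] =ᵐ[ν] fun _ => c :=
    (condExp_congr_ae hae_ν).symm.trans hCE
  -- factorization over preimages
  have hfac : ∀ s : Set ℝ, MeasurableSet s →
      (ν⟦Y ⁻¹' s ∩ B | MeasurableSpace.comap W inferInstance⟧) =ᵐ[ν]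
        fun ω => (ν⟦Y ⁻¹' s | MeasurableSpace.comap W inferInstance⟧) ω *
          (ν⟦B | MeasurableSpace.comap W inferInstance⟧) ω := by
    intro s hs
    exact (condIndepFun_iff_condExp_inter_preimage_eq_mul hYm hZ').mp hCI' s {0} hs
      (measurableSet_singleton 0)
  have hkey := key_setIntegral hm ν hYm hYν hBmeas hfac hCE'
  -- rewrite the conditioning set
  have hS : {ω | Z' ω = 0 ∧ Z ω = 0} = {ω | Z ω = 0} ∩ B := by
    ext ω
    simp only [Set.mem_setOf_eq, Set.mem_inter_iff, hBdef, Set.mem_preimage,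
      Set.mem_singleton_iff]
    exact and_comm
  rw [hS, ← cond_cond_eq_cond_inter hZ0meas hBmeas μ]
  have hcondle : (ν[|B]) ≪ ν := cond_absolutelyContinuous
  have hae_condB : Y0 =ᵐ[ν[|B]] Y := hae_ν.filter_mono hcondle.ae_le
  have hintY0 : ∫ ω, Y0 ω ∂(ν[|B]) = ∫ ω, Y ω ∂(ν[|B]) := integral_congr_ae hae_condB
  have hrfl2 : (ν[|B]) = (ν B)⁻¹ • ν.restrict B := rfl
  rw [hintY0, hrfl2, integral_smul_measure, hkey, ENNReal.toReal_inv, smul_eq_mul,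
    ← mul_assoc, inv_mul_cancel₀ hνBReal, one_mul]
end

section
/- If under ν = μ(·|{Z = 0}) the random variables Y1 and Z' are conditionally independent given the σ-algebra generated by W, and ν[Y1 | σ(W)] = E_μ[Y1] ν-almost surely, then E[Y1 | Z' = 1, Z = 0] = E_μ[Y1]. (This is the paper's Appendix A identity E[Y(1) | Z_{t'} = 1, Z_t = 0] = E[Y(1)] under the unconfoundedness assumption.) -/
open MeasureTheory ProbabilityTheory
open scoped ENNReal NNReal

/-- The σ-algebra generated by a function, as a plain definition (kept out of the local
context so that it does not interfere with instance resolution). -/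
private abbrev genFrom {Ω β : Type*} [MeasurableSpace β] (f : Ω → β) : MeasurableSpace Ω :=
  MeasurableSpace.comap f inferInstance

/-- Appendix A identity: under conditional independence of Y1 and Z' given σ(W) under
ν = μ(·|Z=0), and ν[Y1 | σ(W)] = E_μ[Y1] ν-a.s., one has E[Y1 | Z' = 1, Z = 0] = E_μ[Y1]. -/
theorem cond_mean_Y1_given_diffused
    {Ω : Type*} [MeasurableSpace Ω] [StandardBorelSpace Ω] [Nonempty Ω]
    (μ : Measure Ω) [IsProbabilityMeasure μ]
    {𝒲 : Type*} [MeasurableSpace 𝒲] [StandardBorelSpace 𝒲]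
    (W : Ω → 𝒲) (hW : Measurable W)
    (Z Z' : Ω → ℝ) (hZ : Measurable Z) (hZ' : Measurable Z')
    (hZ01 : ∀ ω, Z ω = 0 ∨ Z ω = 1) (hZ'01 : ∀ ω, Z' ω = 0 ∨ Z' ω = 1)
    (Y0 Y1 : Ω → ℝ) (hY0 : Integrable Y0 μ) (hY1 : Integrable Y1 μ)
    (hZpos : 0 < μ {ω | Z ω = 1}) (hZlt : μ {ω | Z ω = 1} < 1)
    (hmono : μ[|{ω | Z ω = 1}] {ω | Z' ω = 1} = 1)
    (ρ : ℝ) (hρ : ρ = (μ[|{ω | Z ω = 0}] {ω | Z' ω = 1}).toReal)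
    (hρ0 : 0 < ρ) (hρ1 : ρ < 1)
    (hCI : CondIndepFun (MeasurableSpace.comap W inferInstance) hW.comap_le Y1 Z'
      (μ[|{ω | Z ω = 0}]))
    (hCE : (μ[|{ω | Z ω = 0}])[Y1 | MeasurableSpace.comap W inferInstance]
      =ᵐ[μ[|{ω | Z ω = 0}]] fun _ => ∫ ω, Y1 ω ∂μ) :
    ∫ ω, Y1 ω ∂(μ[|{ω | Z' ω = 1 ∧ Z ω = 0}]) = ∫ ω, Y1 ω ∂μ := by
  classical
  have hm : genFrom W ≤ ‹MeasurableSpace Ω› := hW.comap_le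
  set S0 : Set Ω := {ω | Z ω = 0} with hS0def
  have hS0 : MeasurableSet S0 := hZ (measurableSet_singleton 0)
  set B : Set Ω := {ω | Z' ω = 1} with hBdef
  have hB : MeasurableSet B := hZ' (measurableSet_singleton 1)
  set ν := μ[|S0] with hνdef
  set c := ∫ ω, Y1 ω ∂μ with hcdef
  -- μ S0 ≠ 0
  have hS0c : S0 = {ω | Z ω = 1}ᶜ := by
    ext ω
    simp only [Set.mem_compl_iff, Set.mem_setOf_eq, hS0def]
    constructor
    · intro h h1
      rw [h1] at h; norm_num at h
    · intro h
      rcases hZ01 ω with h0 | h1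
      · exact h0
      · exact absurd h1 h
  have hμS0 : μ S0 ≠ 0 := by
    have h1meas : MeasurableSet {ω | Z ω = 1} := hZ (measurableSet_singleton 1)
    rw [hS0c, prob_compl_eq_one_sub h1meas]
    intro h
    rw [tsub_eq_zero_iff_le] at h
    exact absurd h hZlt.not_ge
  haveI hνP : IsProbabilityMeasure ν := cond_isProbabilityMeasure hμS0
  have hY1ν : Integrable Y1 ν := by
    rw [hνdef, ProbabilityTheory.cond]
    exact (hY1.restrict).smul_measure (ENNReal.inv_ne_top.mpr hμS0)
  have hνB0 : ν B ≠ 0 := by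
    intro h
    rw [hρ, h] at hρ0
    simp at hρ0
  -- measurable modification of Y1
  have hY1m := hY1ν.aestronglyMeasurable
  set Y1' := hY1m.mk Y1 with hY1'def
  have hY1'sm := hY1m.stronglyMeasurable_mk
  have hY1'meas : Measurable Y1' := hY1'sm.measurable
  have hae : Y1 =ᵐ[ν] Y1' := hY1m.ae_eq_mk
  have hY1'ν : Integrable Y1' ν := hY1ν.congr hae
  -- transfer conditional independence to Y1'
  have hCI' : CondIndepFun (genFrom W) hm Y1' Z' ν := by
    refine Kernel.IndepFun.congr' hCI ?_ ?_
    · set N := toMeasurable ν {x | Y1 x ≠ Y1' x} with hN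
      have hNmeas : MeasurableSet N := measurableSet_toMeasurable _ _
      have hNnull : ν N = 0 := by
        rw [hN, measure_toMeasurable]
        exact ae_iff.mp hae
      have h1 : (fun ω => (condExpKernel ν (genFrom W) ω N).toReal) =ᵐ[ν] ν⟦N | genFrom W⟧ :=
        condExpKernel_ae_eq_condExp hm hNmeas
      have hind : N.indicator (fun _ => (1:ℝ)) =ᵐ[ν] 0 := by
        filter_upwards [measure_eq_zero_iff_ae_notMem.mp hNnull] with x hx
        simp [Set.indicator_of_notMem hx]
      have h2 : (ν⟦N | genFrom W⟧) =ᵐ[ν] 0 := by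
        have h2' := condExp_congr_ae (m := genFrom W) (μ := ν) hind
        rwa [condExp_zero] at h2'
      have h3 : ∀ᵐ ω ∂ν, condExpKernel ν (genFrom W) ω N = 0 := by
        filter_upwards [h1.trans h2] with ω hω
        simp only [Pi.zero_apply] at hω
        have hfin : condExpKernel ν (genFrom W) ω N ≠ ⊤ := measure_ne_top _ _
        exact ((ENNReal.toReal_eq_zero_iff _).mp hω).resolve_right hfin
      have hFm : MeasurableSet[genFrom W]
          (((fun ω => condExpKernel ν (genFrom W) ω N) ⁻¹' {0})ᶜ) :=
        ((measurable_condExpKernel hNmeas) (measurableSet_singleton 0)).compl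
      have hFnull : ν (((fun ω => condExpKernel ν (genFrom W) ω N) ⁻¹' {0})ᶜ) = 0 := by
        refine measure_eq_zero_iff_ae_notMem.mpr ?_
        filter_upwards [h3] with a ha
        simp [ha]
      have hFtrim : ν.trim hm (((fun ω => condExpKernel ν (genFrom W) ω N) ⁻¹' {0})ᶜ) = 0 := by
        rw [trim_measurableSet_eq hm hFm]; exact hFnull
      filter_upwards [measure_eq_zero_iff_ae_notMem.mp hFtrim] with a ha
      have hκ : condExpKernel ν (genFrom W) a N = 0 := by simpa using ha
      exact ae_iff.mpr (measure_mono_null (subset_toMeasurable _ _) hκ)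
    · exact Filter.Eventually.of_forall fun a => Filter.EventuallyEq.rfl
  -- condExp product identity
  have hkey := (condIndepFun_iff_condExp_inter_preimage_eq_mul (m' := genFrom W) (hm' := hm)
    (μ := ν) hY1'meas hZ').mp hCI'
  set g : Ω → ℝ := ν⟦B | genFrom W⟧ with hgdef
  have hg_sm : StronglyMeasurable[genFrom W] g := stronglyMeasurable_condExp
  have hg_meas : Measurable g := (hg_sm.mono hm).measurable
  have hg_int : Integrable g ν := integrable_condExp
  have hindB_int : Integrable (B.indicator (fun _ => (1:ℝ))) ν := (integrable_const 1).indicator hB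
  have hg_nonneg : 0 ≤ᵐ[ν] g :=
    condExp_nonneg (Filter.Eventually.of_forall fun x =>
      Set.indicator_nonneg (fun _ _ => zero_le_one) x)
  have hg_le_one : g ≤ᵐ[ν] fun _ => (1:ℝ) := by
    have hh := condExp_mono (m := genFrom W) (μ := ν) hindB_int (integrable_const (1:ℝ))
      (Filter.Eventually.of_forall fun x => by
        by_cases hx : x ∈ B <;> simp [hx])
    rwa [condExp_const hm (1:ℝ)] at hh
  -- key set identity
  have hC1 : ∀ s : Set ℝ, MeasurableSet s →
      ν (Y1' ⁻¹' s ∩ B) = ENNReal.ofReal (∫ x in Y1' ⁻¹' s, g x ∂ν) := by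
    intro s hs
    have hA : MeasurableSet (Y1' ⁻¹' s) := hY1'meas hs
    have h1 := hkey s {1} hs (measurableSet_singleton 1)
    have hBpre : Z' ⁻¹' {(1:ℝ)} = B := rfl
    rw [hBpre] at h1
    have hindA_int : Integrable ((Y1' ⁻¹' s).indicator (fun _ => (1:ℝ))) ν :=
      (integrable_const 1).indicator hA
    have hprod_eq : (fun ω => g ω * (Y1' ⁻¹' s).indicator (fun _ => (1:ℝ)) ω)
        = (Y1' ⁻¹' s).indicator g := by
      funext x
      by_cases hx : x ∈ Y1' ⁻¹' s <;> simp [hx]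
    have hint_prod : Integrable (fun ω => g ω * (Y1' ⁻¹' s).indicator (fun _ => (1:ℝ)) ω) ν := by
      rw [hprod_eq]; exact hg_int.indicator hA
    have e2 : ν[(fun ω => g ω * (Y1' ⁻¹' s).indicator (fun _ => (1:ℝ)) ω) | genFrom W]
        =ᵐ[ν] fun ω => g ω * (ν⟦Y1' ⁻¹' s | genFrom W⟧) ω :=
      condExp_mul_of_stronglyMeasurable_left hg_sm hint_prod hindA_int
    have e1 : ∫ ω, (ν⟦Y1' ⁻¹' s ∩ B | genFrom W⟧) ω ∂ν = (ν (Y1' ⁻¹' s ∩ B)).toReal := by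
      rw [integral_condExp hm]
      exact integral_indicator_one (hA.inter hB)
    have e3 : ∫ ω, (ν⟦Y1' ⁻¹' s | genFrom W⟧) ω * g ω ∂ν = ∫ x in Y1' ⁻¹' s, g x ∂ν := by
      calc ∫ ω, (ν⟦Y1' ⁻¹' s | genFrom W⟧) ω * g ω ∂ν
          = ∫ ω, g ω * (ν⟦Y1' ⁻¹' s | genFrom W⟧) ω ∂ν := by simp_rw [mul_comm]
        _ = ∫ ω, (ν[(fun ω => g ω * (Y1' ⁻¹' s).indicator (fun _ => (1:ℝ)) ω) | genFrom W]) ω ∂ν :=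
            (integral_congr_ae e2).symm
        _ = ∫ ω, g ω * (Y1' ⁻¹' s).indicator (fun _ => (1:ℝ)) ω ∂ν :=
            integral_condExp hm
        _ = ∫ x in Y1' ⁻¹' s, g x ∂ν := by rw [hprod_eq, integral_indicator hA]
    have e4 : (ν (Y1' ⁻¹' s ∩ B)).toReal = ∫ x in Y1' ⁻¹' s, g x ∂ν := by
      rw [← e1, integral_congr_ae h1, e3]
    rw [← e4, ENNReal.ofReal_toReal (measure_ne_top _ _)]
  -- withDensity measure
  set ρ₂ : Measure Ω := ν.withDensity (fun x => ((Real.toNNReal (g x) : ℝ≥0) : ℝ≥0∞)) with hρ₂def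
  have hρ₂A : ∀ s : Set ℝ, MeasurableSet s →
      ρ₂ (Y1' ⁻¹' s) = ENNReal.ofReal (∫ x in Y1' ⁻¹' s, g x ∂ν) := by
    intro s hs
    have hA : MeasurableSet (Y1' ⁻¹' s) := hY1'meas hs
    rw [hρ₂def, withDensity_apply _ hA]
    have hco : ∀ x, ((Real.toNNReal (g x) : ℝ≥0) : ℝ≥0∞) = ENNReal.ofReal (g x) := fun x => rfl
    simp_rw [hco]
    rw [← ofReal_integral_eq_lintegral_ofReal (hg_int.restrict) (ae_restrict_of_ae hg_nonneg)]
  have hm0 : genFrom Y1' ≤ ‹MeasurableSpace Ω› := hY1'meas.comap_le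
  have htrim : (ν.restrict B).trim hm0 = ρ₂.trim hm0 := by
    refine @Measure.ext Ω (genFrom Y1') _ _ fun S hS => ?_
    rw [trim_measurableSet_eq hm0 hS, trim_measurableSet_eq hm0 hS]
    obtain ⟨t, ht, rfl⟩ := hS
    rw [Measure.restrict_apply (hY1'meas ht), hC1 t ht, hρ₂A t ht]
  have hY1'm0 : StronglyMeasurable[genFrom Y1'] Y1' := by
    letI : MeasurableSpace Ω := genFrom Y1'
    exact Measurable.stronglyMeasurable (Measurable.of_comap_le le_rfl)
  have hInt_eq : ∫ x in B, Y1' x ∂ν = ∫ x, Y1' x ∂ρ₂ := by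
    calc ∫ x, Y1' x ∂(ν.restrict B)
        = ∫ x, Y1' x ∂((ν.restrict B).trim hm0) := integral_trim hm0 hY1'm0
      _ = ∫ x, Y1' x ∂(ρ₂.trim hm0) := by rw [htrim]
      _ = ∫ x, Y1' x ∂ρ₂ := (integral_trim hm0 hY1'm0).symm
  have hE : ∫ x, Y1' x ∂ρ₂ = ∫ x, g x * Y1' x ∂ν := by
    have htn : Measurable fun x => Real.toNNReal (g x) := measurable_real_toNNReal.comp hg_meas
    rw [hρ₂def, integral_withDensity_eq_integral_smul htn Y1']
    refine integral_congr_ae ?_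
    filter_upwards [hg_nonneg] with x hx
    simp [NNReal.smul_def, Real.coe_toNNReal _ hx]
  have hprod_int : Integrable (fun x => g x * Y1' x) ν := by
    refine hY1'ν.bdd_mul (c := 1) (hg_sm.mono hm).aestronglyMeasurable ?_
    filter_upwards [hg_nonneg, hg_le_one] with x hx0 hx1
    simp only [Pi.zero_apply] at hx0
    rw [Real.norm_eq_abs, abs_le]
    exact ⟨by linarith, hx1⟩
  have hF : ∫ x, g x * Y1' x ∂ν = c * (ν B).toReal := by
    have h5 : ν[(fun x => g x * Y1' x) | genFrom W]
        =ᵐ[ν] fun x => g x * (ν[Y1' | genFrom W]) x :=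
      condExp_mul_of_stronglyMeasurable_left hg_sm hprod_int hY1'ν
    have h6 : ν[Y1' | genFrom W] =ᵐ[ν] fun _ => c := (condExp_congr_ae hae.symm).trans hCE
    calc ∫ x, g x * Y1' x ∂ν
        = ∫ x, (ν[(fun x => g x * Y1' x) | genFrom W]) x ∂ν :=
          (integral_condExp hm).symm
      _ = ∫ x, g x * c ∂ν := by
          refine integral_congr_ae (h5.trans ?_)
          filter_upwards [h6] with x hx
          rw [hx]
      _ = (∫ x, g x ∂ν) * c := integral_mul_const c g
      _ = (ν B).toReal * c := by
          rw [hgdef, integral_condExp hm,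
            show (∫ x, B.indicator (fun _ => (1:ℝ)) x ∂ν) = (ν B).toReal from
              integral_indicator_one hB]
      _ = c * (ν B).toReal := mul_comm _ _
  have hBint : ∫ x in B, Y1 x ∂ν = c * (ν B).toReal := by
    calc ∫ x in B, Y1 x ∂ν = ∫ x in B, Y1' x ∂ν := integral_congr_ae (ae_restrict_of_ae hae)
      _ = ∫ x, Y1' x ∂ρ₂ := hInt_eq
      _ = ∫ x, g x * Y1' x ∂ν := hE
      _ = c * (ν B).toReal := hF
  -- final assembly
  have hT : {ω | Z' ω = 1 ∧ Z ω = 0} = S0 ∩ B := by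
    ext ω
    simp only [Set.mem_setOf_eq, Set.mem_inter_iff, hS0def, hBdef]
    exact and_comm
  rw [hT, ← cond_cond_eq_cond_inter hS0 hB]
  have hcond : (ν[|B]) = (ν B)⁻¹ • ν.restrict B := rfl
  rw [hcond, integral_smul_measure, hBint]
  have hx : (ν B).toReal ≠ 0 := ENNReal.toReal_ne_zero.mpr ⟨hνB0, measure_ne_top _ _⟩
  rw [ENNReal.toReal_inv, smul_eq_mul, mul_comm c, ← mul_assoc, inv_mul_cancel₀ hx, one_mul]
end

section
/- Under assumptions (a)–(d), the conditional expectation of the treated-branch contribution given the network information satisfies μ[Y1 · 1{Z' = 1} | σ(W)] = E[Y1] · π'(W) μ-almost surely, where π'(W) = π + ρ(W)(1 − π). -/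
open MeasureTheory ProbabilityTheory MeasurableSpace Set

section Helpers

variable {Ω : Type*} {m' : MeasurableSpace Ω} [mΩ : MeasurableSpace Ω] [StandardBorelSpace Ω] [Nonempty Ω]
  {μ : Measure Ω} [IsFiniteMeasure μ]

lemma aux_kernel_null (hm' : m' ≤ mΩ) {N : Set Ω} (hN : MeasurableSet N) (hμN : μ N = 0) :
    ∀ᵐ ω ∂μ, condExpKernel μ m' ω N = 0 := by
  have h1 := condExpKernel_ae_eq_condExp (μ := μ) hm' hN
  have h2 : (μ⟦N | m'⟧) =ᵐ[μ] 0 := by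
    refine Filter.EventuallyEq.trans (condExp_congr_ae (g := (0 : Ω → ℝ)) ?_) ?_
    · filter_upwards [measure_eq_zero_iff_ae_notMem.1 hμN] with ω hω
      simp [Set.indicator_of_notMem hω]
    · simp [condExp_zero]
  filter_upwards [h1.trans h2] with ω hω
  have hlt : condExpKernel μ m' ω N ≠ ⊤ := measure_ne_top _ _
  simpa [measureReal_def, ENNReal.toReal_eq_zero_iff, hlt] using hω

lemma aux_ae_indepFun (hm' : m' ≤ mΩ) {f f' g : Ω → ℝ} (hf' : Measurable f') (hg : Measurable g)
    (hff' : f =ᵐ[μ] f') (h : CondIndepFun m' hm' f g μ) :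
    ∀ᵐ ω ∂μ, IndepFun f' g (condExpKernel μ m' ω) := by
  set N : Set Ω := toMeasurable μ {ω | f ω ≠ f' ω} with hNdef
  have hμN : μ N = 0 := by
    rw [measure_toMeasurable]
    exact hff'
  have hN : ∀ᵐ ω ∂μ, condExpKernel μ m' ω N = 0 :=
    aux_kernel_null hm' (measurableSet_toMeasurable μ _) hμN
  have hqr : ∀ q r : ℚ, ∀ᵐ ω ∂μ,
      condExpKernel μ m' ω (f ⁻¹' Iic (q : ℝ) ∩ g ⁻¹' Iic (r : ℝ))
        = condExpKernel μ m' ω (f ⁻¹' Iic (q : ℝ)) * condExpKernel μ m' ω (g ⁻¹' Iic (r : ℝ)) :=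
    fun q r => ae_of_ae_trim hm'
      (h _ _ ⟨Iic (q : ℝ), measurableSet_Iic, rfl⟩ ⟨Iic (r : ℝ), measurableSet_Iic, rfl⟩)
  filter_upwards [hN, ae_all_iff.2 fun q => ae_all_iff.2 fun r => hqr q r] with ω hω0 hω
  have key : ∀ (t : Set ℝ) (B : Set Ω),
      ((f' ⁻¹' t ∩ B : Set Ω) : Set Ω) =ᵐ[condExpKernel μ m' ω] ((f ⁻¹' t ∩ B : Set Ω) : Set Ω) := by
    intro t B
    rw [MeasureTheory.ae_eq_set]
    constructor <;> refine measure_mono_null ?_ hω0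
    · rintro x ⟨⟨h1, h2⟩, h3⟩
      refine subset_toMeasurable μ _ ?_
      exact fun he => h3 ⟨(he ▸ h1 : f x ∈ t), h2⟩
    · rintro x ⟨⟨h1, h2⟩, h3⟩
      refine subset_toMeasurable μ _ ?_
      exact fun he => h3 ⟨(he ▸ h1 : f' x ∈ t), h2⟩
  have key1 : ∀ t : Set ℝ, (f' ⁻¹' t : Set Ω) =ᵐ[condExpKernel μ m' ω] (f ⁻¹' t) := by
    intro t
    have := key t Set.univ
    simpa [Set.inter_univ] using this
  have hgen : (Real.measurableSpace : MeasurableSpace ℝ)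
      = MeasurableSpace.generateFrom (⋃ a : ℚ, {Iic (a : ℝ)}) :=
    Real.borel_eq_generateFrom_Iic_rat
  refine IndepSets.indep (Measurable.comap_le hf') (Measurable.comap_le hg)
    (Real.isPiSystem_Iic_rat.comap f') (Real.isPiSystem_Iic_rat.comap g) ?_ ?_ ?_
  · rw [hgen, MeasurableSpace.comap_generateFrom]
    rfl
  · rw [hgen, MeasurableSpace.comap_generateFrom]
    rfl
  · rintro t1 t2 ⟨s1, hs1, rfl⟩ ⟨s2, hs2, rfl⟩
    simp only [Set.mem_iUnion, Set.mem_singleton_iff] at hs1 hs2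
    obtain ⟨q, rfl⟩ := hs1
    obtain ⟨r, rfl⟩ := hs2
    refine Filter.Eventually.of_forall fun _ => ?_
    simp only [Kernel.const_apply]
    rw [measure_congr (key (Iic (q : ℝ)) (g ⁻¹' Iic (r : ℝ))),
      measure_congr (key1 (Iic (q : ℝ)))]
    exact hω q r

lemma aux_condexp_mul (hm' : m' ≤ mΩ) {f g : Ω → ℝ} (hf : Integrable f μ) (hg : Measurable g)
    (hgbdd : ∀ ω, ‖g ω‖ ≤ 1) (h : CondIndepFun m' hm' f g μ) :
    μ[fun ω => f ω * g ω|m'] =ᵐ[μ] fun ω => (μ[f|m']) ω * (μ[g|m']) ω := by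
  set f' : Ω → ℝ := hf.1.mk f with hf'def
  have hff' : f =ᵐ[μ] f' := hf.1.ae_eq_mk
  have hf'm : Measurable f' := hf.1.measurable_mk.mono le_rfl le_rfl
  have hgint : Integrable g μ :=
    Integrable.mono' (integrable_const 1) hg.aestronglyMeasurable (Filter.Eventually.of_forall hgbdd)
  have hfgint : Integrable (fun ω => f ω * g ω) μ := by
    have := hf.bdd_mul hg.aestronglyMeasurable (c := 1) (Filter.Eventually.of_forall hgbdd)
    simpa [mul_comm] using this
  have h1 := condExp_ae_eq_integral_condExpKernel hm' hfgint
  have h2 := condExp_ae_eq_integral_condExpKernel hm' hf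
  have h3 := condExp_ae_eq_integral_condExpKernel hm' hgint
  have hind := aux_ae_indepFun hm' hf'm hg hff' h
  have hfκ := hf.condExpKernel_ae (m := m')
  set N : Set Ω := toMeasurable μ {ω | f ω ≠ f' ω} with hNdef
  have hμN : μ N = 0 := by rw [measure_toMeasurable]; exact hff'
  have hN : ∀ᵐ ω ∂μ, condExpKernel μ m' ω N = 0 :=
    aux_kernel_null hm' (measurableSet_toMeasurable μ _) hμN
  filter_upwards [h1, h2, h3, hind, hfκ, hN] with ω e1 e2 e3 eind eint e0
  have haeκ : f =ᵐ[condExpKernel μ m' ω] f' :=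
    ae_iff.2 (measure_mono_null (subset_toMeasurable μ _) e0)
  have hgκint : Integrable g (condExpKernel μ m' ω) :=
    Integrable.mono' (integrable_const 1) hg.aestronglyMeasurable (Filter.Eventually.of_forall hgbdd)
  have hfκint : Integrable f' (condExpKernel μ m' ω) := eint.congr haeκ
  rw [e1, e2, e3]
  calc ∫ y, f y * g y ∂condExpKernel μ m' ω
      = ∫ y, f' y * g y ∂condExpKernel μ m' ω :=
        integral_congr_ae (haeκ.mul (Filter.EventuallyEq.refl _ g))
    _ = (∫ y, f' y ∂condExpKernel μ m' ω) * ∫ y, g y ∂condExpKernel μ m' ω :=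
        eind.integral_fun_mul_eq_mul_integral hfκint.1 hgκint.1
    _ = (∫ y, f y ∂condExpKernel μ m' ω) * ∫ y, g y ∂condExpKernel μ m' ω := by
        rw [integral_congr_ae haeκ]

end Helpers

open MeasurableSpace in
lemma aux_measurable_comap {Ω 𝒲 : Type*} [m𝒲 : MeasurableSpace 𝒲] {W : Ω → 𝒲}
    {g0 : 𝒲 → ℝ} (hg0 : Measurable g0) :
    Measurable[MeasurableSpace.comap W m𝒲] fun ω => g0 (W ω) :=
  fun s hs => ⟨g0 ⁻¹' s, hg0 hs, rfl⟩

theorem aux_main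
    {Ω : Type*} {m' : MeasurableSpace Ω} [MeasurableSpace Ω] [StandardBorelSpace Ω] [Nonempty Ω]
    (μ : Measure Ω) [IsProbabilityMeasure μ]
    {𝒲 : Type*} [MeasurableSpace 𝒲] [StandardBorelSpace 𝒲]
    (W : Ω → 𝒲) (hW : Measurable W)
    (hm'W : m' = MeasurableSpace.comap W inferInstance) (hm' : m' ≤ ‹MeasurableSpace Ω›)
    (Z Z' : Ω → ℝ) (hZ : Measurable Z) (hZ' : Measurable Z')
    (hZ01 : ∀ ω, Z ω = 0 ∨ Z ω = 1) (hZ'01 : ∀ ω, Z' ω = 0 ∨ Z' ω = 1)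
    (Y0 Y1 Y : Ω → ℝ) (hY0 : Integrable Y0 μ) (hY1 : Integrable Y1 μ)
    (hYdef : ∀ ω, Y ω = Z' ω * Y1 ω + (1 - Z' ω) * Y0 ω)
    (π : ℝ) (hπ0 : 0 < π) (hπ1 : π < 1)
    (ρ : 𝒲 → ℝ) (hρmeas : Measurable ρ) (hρ01 : ∀ w, 0 ≤ ρ w ∧ ρ w < 1)
    (ha : IndepFun Z W μ) (haπ : μ {ω | Z ω = 1} = ENNReal.ofReal π)
    (hb : ∀ᵐ ω ∂μ, Z ω = 1 → Z' ω = 1)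
    (hc1 : IndepFun Y1 (fun ω => (Z ω, W ω)) μ)
    (hc0 : IndepFun Y0 (fun ω => (Z ω, W ω)) μ)
    (hd0 : CondIndepFun (m') hm' Y0 Z'
      (μ[|{ω | Z ω = 0}]))
    (hd1 : CondIndepFun (m') hm' Y1 Z'
      (μ[|{ω | Z ω = 0}]))
    (hdρ : (μ[|{ω | Z ω = 0}])[fun ω => if Z' ω = 1 then (1:ℝ) else 0 | m']
      =ᵐ[μ[|{ω | Z ω = 0}]] fun ω => ρ (W ω)) :
    μ[fun ω => Y1 ω * (if Z' ω = 1 then (1:ℝ) else 0) | m']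
      =ᵐ[μ] fun ω => (∫ ω', Y1 ω' ∂μ) * (π + ρ (W ω) * (1 - π)) := by
  set c : ℝ := ∫ ω', Y1 ω' ∂μ with hcdef
  set I : Ω → ℝ := fun ω => if Z' ω = 1 then (1:ℝ) else 0 with hIdef
  set J1 : Ω → ℝ := fun ω => if Z ω = 1 then (1:ℝ) else 0 with hJ1def
  set J0 : Ω → ℝ := fun ω => if Z ω = 0 then (1:ℝ) else 0 with hJ0def
  have hImeas : Measurable I := Measurable.ite (hZ' (measurableSet_singleton 1))
    measurable_const measurable_const
  have hIbdd : ∀ ω, ‖I ω‖ ≤ 1 := by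
    intro ω; by_cases h : Z' ω = 1 <;> simp [hIdef, h]
  -- the event {Z = 0}
  set S0 : Set Ω := {ω | Z ω = 0} with hS0def
  have hS0 : MeasurableSet S0 := hZ (measurableSet_singleton 0)
  have hS0c : S0 = {ω | Z ω = 1}ᶜ := by
    ext ω
    rcases hZ01 ω with h | h <;> simp [hS0def, h]
  have hμS0 : μ S0 = ENNReal.ofReal (1 - π) := by
    rw [hS0c, measure_compl (show MeasurableSet {ω | Z ω = 1} from hZ (measurableSet_singleton 1)) (measure_ne_top μ _), haπ,
      measure_univ, ENNReal.ofReal_sub _ hπ0.le, ENNReal.ofReal_one]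
  have hμS0ne : μ S0 ≠ 0 := by
    rw [hμS0]
    simpa using (by linarith : (0:ℝ) < 1 - π)
  set ν : Measure Ω := μ[|S0] with hνdef
  haveI hνprob : IsProbabilityMeasure ν := cond_isProbabilityMeasure hμS0ne
  have hν_smul : ν = (μ S0)⁻¹ • μ.restrict S0 := rfl
  have hIntν : ∀ {h : Ω → ℝ}, Integrable h μ → Integrable h ν := by
    intro h hh
    rw [hν_smul]
    exact (hh.restrict).smul_measure (ENNReal.inv_ne_top.2 hμS0ne)
  have hν_int_eq : ∀ h : Ω → ℝ, ∫ ω, h ω ∂ν = (1 - π)⁻¹ * ∫ ω in S0, h ω ∂μ := by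
    intro h
    rw [hν_smul, integral_smul_measure, hμS0, smul_eq_mul]
    congr 1
    rw [← ENNReal.ofReal_inv_of_pos (by linarith), ENNReal.toReal_ofReal
      (by have : (0:ℝ) < 1 - π := by linarith
          positivity)]
  -- independence helper for Y1
  have hY1mul : ∀ h : ℝ × 𝒲 → ℝ, Measurable h → (∀ p, ‖h p‖ ≤ 1) →
      ∫ ω, Y1 ω * h (Z ω, W ω) ∂μ = c * ∫ ω, h (Z ω, W ω) ∂μ := by
    intro h hh hhb
    have hind : IndepFun Y1 (fun ω => h (Z ω, W ω)) μ := hc1.comp measurable_id hh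
    have hint2 : Integrable (fun ω => h (Z ω, W ω)) μ :=
      Integrable.mono' (integrable_const 1) ((hh.comp (hZ.prodMk hW)).aestronglyMeasurable)
        (Filter.Eventually.of_forall fun ω => hhb _)
    exact hind.integral_fun_mul_eq_mul_integral hY1.1 hint2.1
  -- integrability of the main integrand
  have hfint : Integrable (fun ω => Y1 ω * I ω) μ := by
    have := hY1.bdd_mul hImeas.aestronglyMeasurable (c := 1) (Filter.Eventually.of_forall hIbdd)
    simpa [mul_comm] using this
  -- indicator integral helper
  have hint_ind : ∀ (b : ℝ) (B : Set 𝒲), MeasurableSet B →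
      ∫ ω, (if Z ω = b then (1:ℝ) else 0) * Set.indicator B (fun _ => (1:ℝ)) (W ω) ∂μ
        = (μ (Z ⁻¹' {b} ∩ W ⁻¹' B)).toReal := by
    intro b B hB
    have e : (fun ω => (if Z ω = b then (1:ℝ) else 0) * Set.indicator B (fun _ => (1:ℝ)) (W ω))
        = (Z ⁻¹' {b} ∩ W ⁻¹' B).indicator (fun _ => (1:ℝ)) := by
      funext ω
      by_cases h1 : Z ω = b <;> by_cases h2 : W ω ∈ B <;>
        simp [Set.indicator_apply, h1, h2, Set.mem_preimage]
    rw [e, integral_indicator_const _ ((hZ (measurableSet_singleton b)).inter (hW hB)),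
      smul_eq_mul, mul_one, measureReal_def]
  have hkey : ∀ (b : ℝ) (B : Set 𝒲), MeasurableSet B →
      ∫ ω, Y1 ω * ((if Z ω = b then (1:ℝ) else 0) * Set.indicator B (fun _ => (1:ℝ)) (W ω)) ∂μ
        = c * (μ (Z ⁻¹' {b}) * μ (W ⁻¹' B)).toReal := by
    intro b B hB
    have hmeas : Measurable (fun p : ℝ × 𝒲 =>
        (if p.1 = b then (1:ℝ) else 0) * Set.indicator B (fun _ => (1:ℝ)) p.2) := by
      refine Measurable.mul ?_ ?_
      · exact Measurable.ite (measurable_fst (measurableSet_singleton b)) measurable_const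
          measurable_const
      · exact (measurable_const.indicator hB).comp measurable_snd
    have hbdd : ∀ p : ℝ × 𝒲,
        ‖(if p.1 = b then (1:ℝ) else 0) * Set.indicator B (fun _ => (1:ℝ)) p.2‖ ≤ 1 := by
      intro p
      by_cases h1 : p.1 = b <;> by_cases h2 : p.2 ∈ B <;>
        simp [Set.indicator_apply, h1, h2]
    have h := hY1mul _ hmeas hbdd
    rw [h, hint_ind b B hB, ha.measure_inter_preimage_eq_mul _ _ (measurableSet_singleton b) hB]
  -- integrability of ρ ∘ W
  have hρW1 : ∀ w, ‖ρ w‖ ≤ 1 := by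
    intro w
    obtain ⟨h1, h2⟩ := hρ01 w
    rw [Real.norm_eq_abs, abs_of_nonneg h1]
    linarith
  have hρWint : Integrable (fun ω => ρ (W ω)) μ :=
    Integrable.mono' (integrable_const 1) (hρmeas.comp hW).aestronglyMeasurable
      (Filter.Eventually.of_forall fun ω => hρW1 _)
  -- conditional independence of Y1 and I under ν
  have hd1I : CondIndepFun m' hm' Y1 I ν := by
    have hψ : Measurable (fun x : ℝ => if x = 1 then (1:ℝ) else 0) :=
      Measurable.ite (measurableSet_singleton 1) measurable_const measurable_const
    exact hd1.comp measurable_id hψ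
  have hprod := aux_condexp_mul (μ := ν) hm' (hIntν hY1) hImeas hIbdd hd1I
  -- conditional expectation of Y1 under ν is constant c
  have hcY1 : ν[Y1|m'] =ᵐ[ν] fun _ => c := by
    refine (ae_eq_condExp_of_forall_setIntegral_eq hm' (hIntν hY1)
      (fun s _ _ => (integrable_const c).integrableOn) ?_
      (stronglyMeasurable_const.aestronglyMeasurable)).symm
    intro s hs _
    rw [hm'W] at hs
    obtain ⟨B', hB', rfl⟩ := hs
    have hsm : MeasurableSet (W ⁻¹' B') := hW hB'
    have hR : ∫ x in W ⁻¹' B', Y1 x ∂ν = c * (μ (W ⁻¹' B')).toReal := by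
      rw [← integral_indicator hsm, hν_int_eq, ← integral_indicator hS0]
      have e : S0.indicator ((W ⁻¹' B').indicator Y1)
          = fun ω => Y1 ω * ((if Z ω = (0:ℝ) then (1:ℝ) else 0)
              * Set.indicator B' (fun _ => (1:ℝ)) (W ω)) := by
        funext ω
        by_cases h1 : Z ω = 0 <;> by_cases h2 : W ω ∈ B' <;>
          simp [Set.indicator_apply, h1, h2, hS0def, Set.mem_preimage]
      rw [e, hkey 0 B' hB']
      have : μ (Z ⁻¹' {(0:ℝ)}) = ENNReal.ofReal (1 - π) := hμS0
      rw [this, ENNReal.toReal_mul, ENNReal.toReal_ofReal (by linarith)]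
      have hne : (1:ℝ) - π ≠ 0 := by linarith
      field_simp
    have hL : ∫ _ in W ⁻¹' B', (fun _ => c) 0 ∂ν = c * (μ (W ⁻¹' B')).toReal := by
      rw [setIntegral_const, smul_eq_mul, mul_comm, measureReal_def]
      congr 2
      rw [hνdef, cond_apply hS0,
        show S0 ∩ W ⁻¹' B' = Z ⁻¹' {(0:ℝ)} ∩ W ⁻¹' B' from rfl,
        ha.measure_inter_preimage_eq_mul _ _ (measurableSet_singleton 0) hB',
        show μ (Z ⁻¹' {(0:ℝ)}) = μ S0 from rfl, ← mul_assoc,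
        ENNReal.inv_mul_cancel hμS0ne (measure_ne_top μ S0), one_mul]
    rw [hL, hR]
  -- combined conditional expectation identity under ν
  have hcond : ν[fun ω => Y1 ω * I ω|m'] =ᵐ[ν] fun ω => c * ρ (W ω) := by
    filter_upwards [hprod, hcY1, hdρ] with ω e1 e2 e3
    rw [e1, e2, e3]
  -- global integrability of the candidate conditional expectation
  have hgmeas : Measurable (fun ω => c * (π + ρ (W ω) * (1 - π))) :=
    measurable_const.mul (measurable_const.add ((hρmeas.comp hW).mul measurable_const))
  have hgbdd : ∀ ω, ‖c * (π + ρ (W ω) * (1 - π))‖ ≤ ‖c‖ := by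
    intro ω
    obtain ⟨h1, h2⟩ := hρ01 (W ω)
    rw [norm_mul]
    have h3 : ‖π + ρ (W ω) * (1 - π)‖ ≤ 1 := by
      rw [Real.norm_eq_abs, abs_of_nonneg (by nlinarith)]
      nlinarith
    nlinarith [norm_nonneg c]
  have hgint : Integrable (fun ω => c * (π + ρ (W ω) * (1 - π))) μ :=
    Integrable.mono' (integrable_const ‖c‖) hgmeas.aestronglyMeasurable
      (Filter.Eventually.of_forall hgbdd)
  refine (ae_eq_condExp_of_forall_setIntegral_eq hm' hfint
    (fun s _ _ => hgint.integrableOn) ?_ ?_).symm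
  swap
  · refine StronglyMeasurable.aestronglyMeasurable (Measurable.stronglyMeasurable ?_)
    rw [hm'W]
    exact aux_measurable_comap (g0 := fun w => c * (π + ρ w * (1 - π))) (by
      exact measurable_const.mul (measurable_const.add (hρmeas.mul measurable_const)))
  intro s hs _
  rw [hm'W] at hs
  obtain ⟨B, hB, rfl⟩ := hs
  have hsmeas : MeasurableSet (W ⁻¹' B) := hW hB
  have hsm' : MeasurableSet[m'] (W ⁻¹' B) := by rw [hm'W]; exact ⟨B, hB, rfl⟩
  set χ : Ω → ℝ := fun ω => Set.indicator B (fun _ => (1:ℝ)) (W ω) with hχdef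
  -- LHS expansion
  have hLHS : ∫ ω in W ⁻¹' B, c * (π + ρ (W ω) * (1 - π)) ∂μ
      = c * π * (μ (W ⁻¹' B)).toReal + c * (1 - π) * ∫ ω in W ⁻¹' B, ρ (W ω) ∂μ := by
    have e : ∀ ω, c * (π + ρ (W ω) * (1 - π)) = c * π + (c * (1 - π)) * ρ (W ω) := by
      intro ω; ring
    rw [integral_congr_ae (Filter.Eventually.of_forall fun ω => e ω),
      integral_add ((integrable_const _).integrableOn)
        ((hρWint.const_mul _).integrableOn),
      setIntegral_const, integral_const_mul, smul_eq_mul, measureReal_def]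
    ring
  -- term 1
  have hT1 : ∫ ω in W ⁻¹' B, Y1 ω * J1 ω ∂μ = c * π * (μ (W ⁻¹' B)).toReal := by
    rw [← integral_indicator hsmeas]
    have e : (W ⁻¹' B).indicator (fun ω => Y1 ω * J1 ω)
        = fun ω => Y1 ω * ((if Z ω = (1:ℝ) then (1:ℝ) else 0)
            * Set.indicator B (fun _ => (1:ℝ)) (W ω)) := by
      funext ω
      by_cases h1 : Z ω = 1 <;> by_cases h2 : W ω ∈ B <;>
        simp [Set.indicator_apply, hJ1def, h1, h2, Set.mem_preimage]
    rw [e, hkey 1 B hB, show μ (Z ⁻¹' {(1:ℝ)}) = ENNReal.ofReal π from haπ,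
      ENNReal.toReal_mul, ENNReal.toReal_ofReal hπ0.le]
    ring
  -- term 2
  have hνρint : Integrable (fun ω => ρ (W ω)) ν := hIntν hρWint
  have hρν : ∫ ω in W ⁻¹' B, ρ (W ω) ∂ν = ∫ ω in W ⁻¹' B, ρ (W ω) ∂μ := by
    rw [← integral_indicator hsmeas (μ := ν), hν_int_eq, ← integral_indicator hS0]
    have e : S0.indicator ((W ⁻¹' B).indicator fun ω => ρ (W ω))
        = fun ω => (if Z ω = (0:ℝ) then (1:ℝ) else 0) * (ρ (W ω) * χ ω) := by
      funext ω
      by_cases h1 : Z ω = 0 <;> by_cases h2 : W ω ∈ B <;>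
        simp [Set.indicator_apply, h1, h2, hχdef, hS0def, Set.mem_preimage]
    rw [e]
    have hφm : Measurable (fun x : ℝ => if x = (0:ℝ) then (1:ℝ) else 0) :=
      Measurable.ite (measurableSet_singleton 0) measurable_const measurable_const
    have hψm : Measurable (fun w => ρ w * Set.indicator B (fun _ => (1:ℝ)) w) :=
      hρmeas.mul (measurable_const.indicator hB)
    have hind : IndepFun (fun ω => if Z ω = (0:ℝ) then (1:ℝ) else 0)
        (fun ω => ρ (W ω) * χ ω) μ := ha.comp hφm hψm
    have hi1 : Integrable (fun ω => if Z ω = (0:ℝ) then (1:ℝ) else 0) μ :=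
      Integrable.mono' (integrable_const 1) ((hφm.comp hZ).aestronglyMeasurable)
        (Filter.Eventually.of_forall fun ω => by by_cases h : Z ω = 0 <;> simp [h])
    have hi2 : Integrable (fun ω => ρ (W ω) * χ ω) μ :=
      Integrable.mono' (integrable_const 1) ((hψm.comp hW).aestronglyMeasurable)
        (Filter.Eventually.of_forall fun ω => by
          by_cases h2 : W ω ∈ B
          · simp only [hχdef, Set.indicator_of_mem h2, mul_one]
            exact hρW1 _
          · simp [hχdef, Set.indicator_of_notMem h2])
    have hsplit : ∫ ω, (if Z ω = (0:ℝ) then (1:ℝ) else 0) * (ρ (W ω) * χ ω) ∂μ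
        = (∫ ω, (if Z ω = (0:ℝ) then (1:ℝ) else 0) ∂μ) * ∫ ω, ρ (W ω) * χ ω ∂μ :=
      hind.integral_fun_mul_eq_mul_integral hi1.1 hi2.1
    rw [hsplit]
    have h1 : ∫ ω, (if Z ω = (0:ℝ) then (1:ℝ) else 0) ∂μ = 1 - π := by
      have e2 : (fun ω => if Z ω = (0:ℝ) then (1:ℝ) else 0)
          = S0.indicator (fun _ => (1:ℝ)) := by
        funext ω
        by_cases h : Z ω = 0 <;> simp [Set.indicator_apply, h, hS0def]
      rw [e2, integral_indicator_const _ hS0, smul_eq_mul, mul_one, measureReal_def, hμS0,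
        ENNReal.toReal_ofReal (by linarith)]
    have h2 : ∫ ω, ρ (W ω) * χ ω ∂μ = ∫ ω in W ⁻¹' B, ρ (W ω) ∂μ := by
      rw [← integral_indicator hsmeas]
      congr 1
      funext ω
      by_cases h2 : W ω ∈ B <;>
        simp [Set.indicator_apply, h2, hχdef, Set.mem_preimage]
    rw [h1, h2]
    have hne : (1:ℝ) - π ≠ 0 := by linarith
    field_simp
  have hT2 : ∫ ω in W ⁻¹' B, Y1 ω * (J0 ω * I ω) ∂μ
      = c * (1 - π) * ∫ ω in W ⁻¹' B, ρ (W ω) ∂μ := by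
    have step1 : ∫ ω in W ⁻¹' B, Y1 ω * (J0 ω * I ω) ∂μ
        = ∫ ω in S0, Y1 ω * I ω * χ ω ∂μ := by
      rw [← integral_indicator hsmeas, ← integral_indicator hS0]
      congr 1
      funext ω
      by_cases h1 : Z ω = 0 <;> by_cases h2 : W ω ∈ B <;>
        simp [Set.indicator_apply, h1, h2, hJ0def, hχdef, hS0def, Set.mem_preimage] <;> ring
    have step2 : ∫ ω in S0, Y1 ω * I ω * χ ω ∂μ
        = (1 - π) * ∫ ω, Y1 ω * I ω * χ ω ∂ν := by
      rw [hν_int_eq]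
      have hne : (1:ℝ) - π ≠ 0 := by linarith
      field_simp
    have step3 : ∫ ω, Y1 ω * I ω * χ ω ∂ν = ∫ ω in W ⁻¹' B, Y1 ω * I ω ∂ν := by
      rw [← integral_indicator hsmeas (μ := ν)]
      congr 1
      funext ω
      by_cases h2 : W ω ∈ B <;>
        simp [Set.indicator_apply, h2, hχdef, Set.mem_preimage]
    have step4 : ∫ ω in W ⁻¹' B, Y1 ω * I ω ∂ν = ∫ ω in W ⁻¹' B, c * ρ (W ω) ∂ν := by
      rw [← setIntegral_condExp hm' (hIntν hfint) hsm']
      exact integral_congr_ae (ae_restrict_of_ae hcond)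
    have step5 : ∫ ω in W ⁻¹' B, c * ρ (W ω) ∂ν = c * ∫ ω in W ⁻¹' B, ρ (W ω) ∂μ := by
      rw [integral_const_mul, hρν]
    rw [step1, step2, step3, step4, step5]
    ring
  -- a.e. decomposition of the integrand
  have hae : ∀ᵐ ω ∂μ, Y1 ω * I ω = Y1 ω * J1 ω + Y1 ω * (J0 ω * I ω) := by
    filter_upwards [hb] with ω hω
    rcases hZ01 ω with h | h
    · simp [hJ1def, hJ0def, h, (by norm_num : (0:ℝ) ≠ 1)]
    · simp [hJ1def, hJ0def, h, hω h, hIdef, (by norm_num : (1:ℝ) ≠ 0)]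
  have hJ1int : Integrable (fun ω => Y1 ω * J1 ω) μ := by
    have hJ1m : Measurable J1 := Measurable.ite (hZ (measurableSet_singleton 1))
      measurable_const measurable_const
    have := hY1.bdd_mul hJ1m.aestronglyMeasurable (c := 1)
      (Filter.Eventually.of_forall fun ω => by by_cases h : Z ω = 1 <;> simp [hJ1def, h])
    simpa [mul_comm] using this
  have hJ0Iint : Integrable (fun ω => Y1 ω * (J0 ω * I ω)) μ := by
    have hJ0m : Measurable fun ω => J0 ω * I ω :=
      (Measurable.ite (hZ (measurableSet_singleton 0)) measurable_const measurable_const).mul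
        hImeas
    have := hY1.bdd_mul hJ0m.aestronglyMeasurable (c := 1)
      (Filter.Eventually.of_forall fun ω => by
        by_cases h1 : Z ω = 0 <;> by_cases h2 : Z' ω = 1 <;> simp [hJ0def, hIdef, h1, h2])
    simpa [mul_comm] using this
  calc ∫ ω in W ⁻¹' B, c * (π + ρ (W ω) * (1 - π)) ∂μ
      = c * π * (μ (W ⁻¹' B)).toReal + c * (1 - π) * ∫ ω in W ⁻¹' B, ρ (W ω) ∂μ := hLHS
    _ = ∫ ω in W ⁻¹' B, Y1 ω * J1 ω ∂μ + ∫ ω in W ⁻¹' B, Y1 ω * (J0 ω * I ω) ∂μ := by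
        rw [hT1, hT2]
    _ = ∫ ω in W ⁻¹' B, (Y1 ω * J1 ω + Y1 ω * (J0 ω * I ω)) ∂μ :=
        (integral_add hJ1int.integrableOn hJ0Iint.integrableOn).symm
    _ = ∫ ω in W ⁻¹' B, Y1 ω * I ω ∂μ :=
        (integral_congr_ae (ae_restrict_of_ae hae)).symm

/-- Bernoulli randomized setting: the conditional expectation of the treated-branch contribution
given the network information satisfies μ[Y1·1{Z'=1} | σ(W)] = E[Y1]·π'(W) μ-a.s.,
where π'(W) = π + ρ(W)(1 − π). -/
theorem treated_branch_condexp_bernoulli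
    {Ω : Type*} [MeasurableSpace Ω] [StandardBorelSpace Ω] [Nonempty Ω]
    (μ : Measure Ω) [IsProbabilityMeasure μ]
    {𝒲 : Type*} [MeasurableSpace 𝒲] [StandardBorelSpace 𝒲]
    (W : Ω → 𝒲) (hW : Measurable W)
    (Z Z' : Ω → ℝ) (hZ : Measurable Z) (hZ' : Measurable Z')
    (hZ01 : ∀ ω, Z ω = 0 ∨ Z ω = 1) (hZ'01 : ∀ ω, Z' ω = 0 ∨ Z' ω = 1)
    (Y0 Y1 Y : Ω → ℝ) (hY0 : Integrable Y0 μ) (hY1 : Integrable Y1 μ)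
    (hYdef : ∀ ω, Y ω = Z' ω * Y1 ω + (1 - Z' ω) * Y0 ω)
    (π : ℝ) (hπ0 : 0 < π) (hπ1 : π < 1)
    (ρ : 𝒲 → ℝ) (hρmeas : Measurable ρ) (hρ01 : ∀ w, 0 ≤ ρ w ∧ ρ w < 1)
    (ha : IndepFun Z W μ) (haπ : μ {ω | Z ω = 1} = ENNReal.ofReal π)
    (hb : ∀ᵐ ω ∂μ, Z ω = 1 → Z' ω = 1)
    (hc1 : IndepFun Y1 (fun ω => (Z ω, W ω)) μ)
    (hc0 : IndepFun Y0 (fun ω => (Z ω, W ω)) μ)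
    (hd0 : CondIndepFun (MeasurableSpace.comap W inferInstance) hW.comap_le Y0 Z'
      (μ[|{ω | Z ω = 0}]))
    (hd1 : CondIndepFun (MeasurableSpace.comap W inferInstance) hW.comap_le Y1 Z'
      (μ[|{ω | Z ω = 0}]))
    (hdρ : (μ[|{ω | Z ω = 0}])[fun ω => if Z' ω = 1 then (1:ℝ) else 0 |
        MeasurableSpace.comap W inferInstance]
      =ᵐ[μ[|{ω | Z ω = 0}]] fun ω => ρ (W ω)) :
    μ[fun ω => Y1 ω * (if Z' ω = 1 then (1:ℝ) else 0) | MeasurableSpace.comap W inferInstance]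
      =ᵐ[μ] fun ω => (∫ ω', Y1 ω' ∂μ) * (π + ρ (W ω) * (1 - π)) :=
  aux_main μ W hW rfl hW.comap_le Z Z' hZ hZ' hZ01 hZ'01 Y0 Y1 Y hY0 hY1 hYdef π hπ0 hπ1
    ρ hρmeas hρ01 ha haπ hb hc1 hc0 hd0 hd1 hdρ
end

section
/- Single-unit unbiasedness of the post-diffusion Horvitz–Thompson weighting in the Bernoulli randomized setting: under assumptions (a)–(d), E[Y · Z' / π'(W)] = E[Y1] and E[Y · (1 − Z') / (1 − π'(W))] = E[Y0]; consequently E[ Y·Z'/π'(W) − Y·(1 − Z')/(1 − π'(W)) ] = E[Y1] − E[Y0]. -/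
open MeasureTheory ProbabilityTheory

lemma condexpKernel_null {Ω : Type*} {m mΩ : MeasurableSpace Ω} [StandardBorelSpace Ω]
    (hm : m ≤ mΩ)
    (ν : Measure Ω) [IsProbabilityMeasure ν] {N : Set Ω} (hN : MeasurableSet N)
    (h0 : ν N = 0) :
    ∀ᵐ a ∂(ν.trim hm), condExpKernel ν m a N = 0 := by
  have h1 : (fun ω => (condExpKernel ν m ω N).toReal) =ᵐ[ν] (fun _ => (0:ℝ)) := by
    refine (condExpKernel_ae_eq_condExp hm hN).trans ?_
    have hind : N.indicator (fun _ => (1:ℝ)) =ᵐ[ν] (fun _ => (0:ℝ)) := by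
      rw [Filter.eventuallyEq_iff_exists_mem]
      exact ⟨Nᶜ, by rwa [MeasureTheory.mem_ae_iff, compl_compl],
        fun ω hω => Set.indicator_of_notMem hω _⟩
    calc ν[N.indicator (fun _ => (1:ℝ))|m] =ᵐ[ν] ν[(fun _ => (0:ℝ))|m] :=
          condExp_congr_ae hind
      _ =ᵐ[ν] (fun _ => (0:ℝ)) := by rw [condExp_const hm]
  have h2 : (fun ω => (condExpKernel ν m ω N).toReal) =ᵐ[ν.trim hm] (fun _ => (0:ℝ)) := by
    rw [StronglyMeasurable.ae_eq_trim_iff hm ?_ stronglyMeasurable_const]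
    · exact h1
    · exact Measurable.stronglyMeasurable
        (@Measurable.ennreal_toReal _ m _ (measurable_condExpKernel hN))
  filter_upwards [h2] with a ha
  have hfin : condExpKernel ν m a N ≠ ⊤ := measure_ne_top _ _
  simpa [ENNReal.toReal_eq_zero_iff, hfin] using ha

lemma condIndepFun_congr_left {Ω : Type*} {m mΩ : MeasurableSpace Ω} [StandardBorelSpace Ω]
    (hm : m ≤ mΩ)
    (ν : Measure Ω) [IsProbabilityMeasure ν] {X X' Z' : Ω → ℝ}
    (h : CondIndepFun m hm X Z' ν) (hae : X =ᵐ[ν] X') :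
    CondIndepFun m hm X' Z' ν := by
  refine Kernel.IndepFun.congr' h ?_ ?_
  · set N := toMeasurable ν {ω | X ω ≠ X' ω} with hNdef
    have hNnull : ν N = 0 := by
      rw [measure_toMeasurable]
      exact hae
    have h0 := condexpKernel_null hm ν (measurableSet_toMeasurable _ _) hNnull
    filter_upwards [h0] with a ha
    refine measure_mono_null (fun ω hω => ?_) ha
    exact subset_toMeasurable _ _ hω
  · filter_upwards with a
    exact Filter.EventuallyEq.rfl

lemma integral_bdd_mul_condexp {Ω : Type*} {m mΩ : MeasurableSpace Ω} (hm : m ≤ mΩ)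
    (ν : Measure Ω) [IsProbabilityMeasure ν] {c f : Ω → ℝ}
    (hc : StronglyMeasurable[m] c) (C : ℝ) (hC : ∀ ω, |c ω| ≤ C)
    (hf : Integrable f ν) :
    ∫ ω, c ω * f ω ∂ν = ∫ ω, c ω * (ν[f|m]) ω ∂ν := by
  have hbound : ∀ᵐ ω ∂ν, ‖c ω‖ ≤ C := ae_of_all _ fun ω => by
    simpa [Real.norm_eq_abs] using hC ω
  have hint : Integrable (fun ω => c ω * f ω) ν :=
    hf.bdd_mul (hc.mono hm).aestronglyMeasurable hbound
  have h1 : ∫ ω, c ω * f ω ∂ν = ∫ ω, (ν[fun ω => c ω * f ω|m]) ω ∂ν :=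
    (integral_condExp hm).symm
  rw [h1]
  refine integral_congr_ae ?_
  have h2 := condExp_stronglyMeasurable_mul_of_bound hm hc hf C hbound
  filter_upwards [h2] with ω hω
  exact hω

/-- If two bounded functions have equal integrals on every `m`-measurable set, then their
integrals against any `m`-strongly-measurable integrable function agree. -/
lemma integral_mul_eq_of_setIntegral_eq {Ω : Type*} {m mΩ : MeasurableSpace Ω} (hm : m ≤ mΩ)
    (ν : Measure Ω) [IsProbabilityMeasure ν] {X φ ψ : Ω → ℝ} (C : ℝ)
    (hX_sm : StronglyMeasurable[m] X) (hXi : Integrable X ν)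
    (hφmeas : AEStronglyMeasurable φ ν) (hψmeas : AEStronglyMeasurable ψ ν)
    (hφb : ∀ ω, ‖φ ω‖ ≤ C) (hψb : ∀ ω, ‖ψ ω‖ ≤ C)
    (heq : ∀ s : Set Ω, MeasurableSet[m] s → ∫ x in s, φ x ∂ν = ∫ x in s, ψ x ∂ν) :
    ∫ ω, X ω * φ ω ∂ν = ∫ ω, X ω * ψ ω ∂ν := by
  have hφint : Integrable φ ν := (integrable_const C).mono' hφmeas (ae_of_all _ hφb)
  have hψint : Integrable ψ ν := (integrable_const C).mono' hψmeas (ae_of_all _ hψb)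
  have hcond : (ν[ψ|m]) =ᵐ[ν] (ν[φ|m]) := by
    refine ae_eq_condExp_of_forall_setIntegral_eq hm hφint
      (fun s _ _ => integrable_condExp.integrableOn) (fun s hs _ => ?_)
      (StronglyMeasurable.aestronglyMeasurable stronglyMeasurable_condExp)
    rw [setIntegral_condExp hm hψint hs]
    exact (heq s hs).symm
  have hXφ_int' : Integrable (X * φ) ν := by
    refine (hXi.bdd_mul hφmeas (ae_of_all _ hφb)).congr (ae_of_all _ fun ω => ?_)
    simp [mul_comm]
  have hXψ_int' : Integrable (X * ψ) ν := by
    refine (hXi.bdd_mul hψmeas (ae_of_all _ hψb)).congr (ae_of_all _ fun ω => ?_)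
    simp [mul_comm]
  calc ∫ ω, X ω * φ ω ∂ν = ∫ ω, (ν[X * φ|m]) ω ∂ν := (integral_condExp hm).symm
    _ = ∫ ω, (X * (ν[φ|m])) ω ∂ν :=
        integral_congr_ae (condExp_mul_of_stronglyMeasurable_left hX_sm hXφ_int' hφint)
    _ = ∫ ω, (X * (ν[ψ|m])) ω ∂ν := by
        refine integral_congr_ae ?_
        filter_upwards [hcond] with ω h
        simp only [Pi.mul_apply, h]
    _ = ∫ ω, (ν[X * ψ|m]) ω ∂ν :=
        (integral_congr_ae (condExp_mul_of_stronglyMeasurable_left hX_sm hXψ_int' hψint)).symm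
    _ = ∫ ω, X ω * ψ ω ∂ν := integral_condExp hm

lemma key_cond_integral {Ω 𝒲 : Type*} {m mΩ : MeasurableSpace Ω} [StandardBorelSpace Ω]
    [Nonempty Ω] [MeasurableSpace 𝒲] (hm : m ≤ mΩ)
    (ν : Measure Ω) [IsProbabilityMeasure ν]
    {W : Ω → 𝒲} (hWm : Measurable[m] W) {X Z' : Ω → ℝ}
    (hXm : Measurable X) (hXi : Integrable X ν) (hZ' : Measurable Z')
    (hind : CondIndepFun m hm X Z' ν)
    {ρ : 𝒲 → ℝ} (hρmeas : Measurable ρ) (hρ1 : ∀ w, |ρ w| ≤ 1)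
    (hdρ : (ν[fun ω => if Z' ω = 1 then (1:ℝ) else 0 | m]) =ᵐ[ν] fun ω => ρ (W ω))
    {g : 𝒲 → ℝ} (hg : Measurable g) (C : ℝ) (hgC : ∀ w, |g w| ≤ C) :
    ∫ ω, X ω * ((if Z' ω = 1 then (1:ℝ) else 0) * g (W ω)) ∂ν
      = ∫ ω, X ω * (ρ (W ω) * g (W ω)) ∂ν := by
  have hC0 : 0 ≤ C := le_trans (abs_nonneg _) (hgC (W (Classical.arbitrary Ω)))
  have hW : Measurable W := (hWm.mono hm le_rfl)
  have hgW_sm : StronglyMeasurable[m] (fun ω => g (W ω)) := (hg.comp hWm).stronglyMeasurable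
  have hρgW_sm : StronglyMeasurable[m] (fun ω => ρ (W ω) * g (W ω)) :=
    ((hρmeas.comp hWm).mul (hg.comp hWm)).stronglyMeasurable
  have hρgC : ∀ ω, |ρ (W ω) * g (W ω)| ≤ C := fun ω => by
    rw [abs_mul]
    calc |ρ (W ω)| * |g (W ω)| ≤ 1 * C :=
          mul_le_mul (hρ1 _) (hgC _) (abs_nonneg _) zero_le_one
      _ = C := one_mul C
  have hA : MeasurableSet (Z' ⁻¹' {1}) := hZ' (measurableSet_singleton 1)
  have hZind : (fun ω => if Z' ω = 1 then (1:ℝ) else 0)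
      = (Z' ⁻¹' {1}).indicator (fun _ => (1:ℝ)) := by
    funext ω; by_cases h : Z' ω = 1 <;> simp [Set.indicator_apply, h]
  have hdρ' : (ν[(Z' ⁻¹' {1}).indicator (fun _ => (1:ℝ))|m]) =ᵐ[ν] fun ω => ρ (W ω) := by
    rw [← hZind]; exact hdρ
  have hint_ind : ∀ {t : Set Ω}, MeasurableSet t →
      Integrable (t.indicator (fun _ => (1:ℝ))) ν :=
    fun ht => (integrable_const (1:ℝ)).indicator ht
  -- Step 1: the identity for indicators of X-preimages
  have step1 : ∀ s : Set ℝ, MeasurableSet s →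
      ∫ ω, (X ⁻¹' s).indicator (fun _ => (1:ℝ)) ω
          * ((if Z' ω = 1 then (1:ℝ) else 0) * g (W ω)) ∂ν
        = ∫ ω, (X ⁻¹' s).indicator (fun _ => (1:ℝ)) ω * (ρ (W ω) * g (W ω)) ∂ν := by
    intro s hs
    have hBmeas : MeasurableSet (X ⁻¹' s) := hXm hs
    have hBA : MeasurableSet (X ⁻¹' s ∩ Z' ⁻¹' {1}) := hBmeas.inter hA
    have hset := (condIndepFun_iff_condExp_inter_preimage_eq_mul (hm' := hm) hXm hZ').mp
      hind s {1} hs (measurableSet_singleton 1)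
    have hpt1 : ∀ ω, (X ⁻¹' s).indicator (fun _ => (1:ℝ)) ω
        * ((if Z' ω = 1 then (1:ℝ) else 0) * g (W ω))
        = g (W ω) * (X ⁻¹' s ∩ Z' ⁻¹' {1}).indicator (fun _ => (1:ℝ)) ω := by
      intro ω
      by_cases h1 : X ω ∈ s <;> by_cases h2 : Z' ω = 1 <;>
        simp [Set.indicator_apply, Set.mem_inter_iff, h1, h2] <;> ring
    calc ∫ ω, (X ⁻¹' s).indicator (fun _ => (1:ℝ)) ω
            * ((if Z' ω = 1 then (1:ℝ) else 0) * g (W ω)) ∂ν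
        = ∫ ω, g (W ω) * (X ⁻¹' s ∩ Z' ⁻¹' {1}).indicator (fun _ => (1:ℝ)) ω ∂ν := by
          simp_rw [hpt1]
      _ = ∫ ω, g (W ω) * (ν[(X ⁻¹' s ∩ Z' ⁻¹' {1}).indicator (fun _ => (1:ℝ))|m]) ω ∂ν :=
          integral_bdd_mul_condexp hm ν hgW_sm C (fun ω => hgC _) (hint_ind hBA)
      _ = ∫ ω, (ρ (W ω) * g (W ω)) * (ν[(X ⁻¹' s).indicator (fun _ => (1:ℝ))|m]) ω ∂ν := by
          refine integral_congr_ae ?_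
          filter_upwards [hset, hdρ'] with ω h1 h2
          rw [h1, h2]; ring
      _ = ∫ ω, (ρ (W ω) * g (W ω)) * (X ⁻¹' s).indicator (fun _ => (1:ℝ)) ω ∂ν :=
          (integral_bdd_mul_condexp hm ν hρgW_sm C hρgC (hint_ind hBmeas)).symm
      _ = ∫ ω, (X ⁻¹' s).indicator (fun _ => (1:ℝ)) ω * (ρ (W ω) * g (W ω)) ∂ν := by
          refine integral_congr_ae (ae_of_all _ fun ω => ?_); ring
  -- Step 2
  have hφmeas : Measurable (fun ω => (if Z' ω = 1 then (1:ℝ) else 0) * g (W ω)) :=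
    (Measurable.ite hA measurable_const measurable_const).mul (hg.comp hW)
  have hψmeas : Measurable (fun ω => ρ (W ω) * g (W ω)) := (hρmeas.comp hW).mul (hg.comp hW)
  have hφbound : ∀ ω, ‖(if Z' ω = 1 then (1:ℝ) else 0) * g (W ω)‖ ≤ C := fun ω => by
    by_cases h : Z' ω = 1 <;> simp [h, Real.norm_eq_abs, abs_mul, hC0]
    · simpa [Real.norm_eq_abs] using hgC (W ω)
  have hψbound : ∀ ω, ‖ρ (W ω) * g (W ω)‖ ≤ C := fun ω => by
    rw [Real.norm_eq_abs]; exact hρgC ω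
  have hX_sm1 : StronglyMeasurable[MeasurableSpace.comap X inferInstance] X :=
    Measurable.stronglyMeasurable (fun s hs => ⟨s, hs, rfl⟩)
  refine integral_mul_eq_of_setIntegral_eq hXm.comap_le ν C hX_sm1 hXi
    hφmeas.aestronglyMeasurable hψmeas.aestronglyMeasurable hφbound hψbound ?_
  rintro s ⟨t, ht, rfl⟩
  have hconv : ∀ (F : Ω → ℝ), ∫ x in X ⁻¹' t, F x ∂ν
      = ∫ x, (X ⁻¹' t).indicator (fun _ => (1:ℝ)) x * F x ∂ν := by
    intro F
    rw [← integral_indicator (hXm ht)]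
    refine integral_congr_ae (ae_of_all _ fun x => ?_)
    by_cases h : x ∈ X ⁻¹' t <;> simp [Set.indicator_apply, h]
  rw [hconv, hconv]
  exact step1 t ht
set_option maxHeartbeats 1000000 in
/-- Single-unit unbiasedness of the post-diffusion Horvitz–Thompson weighting in the Bernoulli
randomized setting: E[Y·Z'/π'(W)] = E[Y1], E[Y·(1 − Z')/(1 − π'(W))] = E[Y0], and hence
E[Y·Z'/π'(W) − Y·(1 − Z')/(1 − π'(W))] = E[Y1] − E[Y0]. -/
theorem horvitz_thompson_single_unit_bernoulli
    {Ω : Type*} [MeasurableSpace Ω] [StandardBorelSpace Ω] [Nonempty Ω]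
    (μ : Measure Ω) [IsProbabilityMeasure μ]
    {𝒲 : Type*} [MeasurableSpace 𝒲] [StandardBorelSpace 𝒲]
    (W : Ω → 𝒲) (hW : Measurable W)
    (Z Z' : Ω → ℝ) (hZ : Measurable Z) (hZ' : Measurable Z')
    (hZ01 : ∀ ω, Z ω = 0 ∨ Z ω = 1) (hZ'01 : ∀ ω, Z' ω = 0 ∨ Z' ω = 1)
    (Y0 Y1 Y : Ω → ℝ) (hY0 : Integrable Y0 μ) (hY1 : Integrable Y1 μ)
    (hYdef : ∀ ω, Y ω = Z' ω * Y1 ω + (1 - Z' ω) * Y0 ω)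
    (π : ℝ) (hπ0 : 0 < π) (hπ1 : π < 1)
    (ρ : 𝒲 → ℝ) (hρmeas : Measurable ρ) (hρ01 : ∀ w, 0 ≤ ρ w ∧ ρ w < 1)
    (ha : IndepFun Z W μ) (haπ : μ {ω | Z ω = 1} = ENNReal.ofReal π)
    (hb : ∀ᵐ ω ∂μ, Z ω = 1 → Z' ω = 1)
    (hc1 : IndepFun Y1 (fun ω => (Z ω, W ω)) μ)
    (hc0 : IndepFun Y0 (fun ω => (Z ω, W ω)) μ)
    (hd0 : CondIndepFun (MeasurableSpace.comap W inferInstance) hW.comap_le Y0 Z'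
      (μ[|{ω | Z ω = 0}]))
    (hd1 : CondIndepFun (MeasurableSpace.comap W inferInstance) hW.comap_le Y1 Z'
      (μ[|{ω | Z ω = 0}]))
    (hdρ : (μ[|{ω | Z ω = 0}])[fun ω => if Z' ω = 1 then (1:ℝ) else 0 |
        MeasurableSpace.comap W inferInstance]
      =ᵐ[μ[|{ω | Z ω = 0}]] fun ω => ρ (W ω)) :
    (∫ ω, Y ω * Z' ω / (π + ρ (W ω) * (1 - π)) ∂μ = ∫ ω, Y1 ω ∂μ)
    ∧ (∫ ω, Y ω * (1 - Z' ω) / (1 - (π + ρ (W ω) * (1 - π))) ∂μ = ∫ ω, Y0 ω ∂μ)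
    ∧ (∫ ω, (Y ω * Z' ω / (π + ρ (W ω) * (1 - π))
          - Y ω * (1 - Z' ω) / (1 - (π + ρ (W ω) * (1 - π)))) ∂μ
        = ∫ ω, Y1 ω ∂μ - ∫ ω, Y0 ω ∂μ) := by
  -- ## basic numeric facts
  have hπ1' : (0:ℝ) < 1 - π := by linarith
  have h1πne : (1:ℝ) - π ≠ 0 := ne_of_gt hπ1'
  have hρabs : ∀ w, |ρ w| ≤ 1 := fun w => by
    rw [abs_of_nonneg (hρ01 w).1]; exact (hρ01 w).2.le
  -- ## the events
  set s1 : Set Ω := {ω | Z ω = 1} with hs1def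
  set s0 : Set Ω := {ω | Z ω = 0} with hs0def
  have hs1m : MeasurableSet s1 := hZ (measurableSet_singleton 1)
  have hs0eq : s0 = s1ᶜ := by
    ext ω
    rcases hZ01 ω with h | h <;>
      simp [hs0def, hs1def, Set.mem_setOf_eq, Set.mem_compl_iff, h]
  have hs0m : MeasurableSet s0 := by rw [hs0eq]; exact hs1m.compl
  have hμs0 : μ s0 = ENNReal.ofReal (1 - π) := by
    rw [hs0eq, measure_compl hs1m (measure_ne_top _ _), haπ, measure_univ,
      ENNReal.ofReal_sub 1 hπ0.le, ENNReal.ofReal_one]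
  have hs1r : (μ s1).toReal = π := by rw [haπ, ENNReal.toReal_ofReal hπ0.le]
  have hs0r : (μ s0).toReal = 1 - π := by rw [hμs0, ENNReal.toReal_ofReal hπ1'.le]
  have hs0ne : μ s0 ≠ 0 := by
    rw [hμs0]
    simp only [ne_eq, ENNReal.ofReal_eq_zero, not_le]
    linarith
  have hs0fin : μ s0 ≠ ⊤ := measure_ne_top μ s0
  -- ## the conditional measure
  set ν : Measure Ω := μ[|s0] with hνdef
  haveI hνprob : IsProbabilityMeasure ν := cond_isProbabilityMeasure hs0ne
  have hν_ac : ν ≪ μ := cond_absolutelyContinuous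
  have hrestrict0 : ∀ (f : Ω → ℝ), ∫ x in s0, f x ∂μ = (1 - π) * ∫ x, f x ∂ν := by
    intro f
    rw [hνdef, ProbabilityTheory.cond, integral_smul_measure, ENNReal.toReal_inv, hs0r,
      smul_eq_mul, ← mul_assoc, mul_inv_cancel₀ h1πne, one_mul]
  have hIntν : ∀ {f : Ω → ℝ}, Integrable f μ → Integrable f ν := by
    intro f hf
    rw [hνdef, ProbabilityTheory.cond]
    exact hf.integrableOn.smul_measure (by simp [hs0ne])
  have hresteq : μ.restrict s0 = (μ s0) • ν := by
    rw [hνdef, ProbabilityTheory.cond, smul_smul, ENNReal.mul_inv_cancel hs0ne hs0fin, one_smul]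
  -- ## measurable representatives
  have hY1am : AEMeasurable Y1 μ := hY1.aemeasurable
  have hY0am : AEMeasurable Y0 μ := hY0.aemeasurable
  set Y1' : Ω → ℝ := hY1am.mk Y1 with hY1'def
  set Y0' : Ω → ℝ := hY0am.mk Y0 with hY0'def
  have hY1'm : Measurable Y1' := hY1am.measurable_mk
  have hY0'm : Measurable Y0' := hY0am.measurable_mk
  have hY1'ae : Y1 =ᵐ[μ] Y1' := hY1am.ae_eq_mk
  have hY0'ae : Y0 =ᵐ[μ] Y0' := hY0am.ae_eq_mk
  have hY1'aeν : Y1 =ᵐ[ν] Y1' := hY1'ae.filter_mono hν_ac.ae_le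
  have hY0'aeν : Y0 =ᵐ[ν] Y0' := hY0'ae.filter_mono hν_ac.ae_le
  have hY1'i : Integrable Y1' μ := hY1.congr hY1'ae
  have hY0'i : Integrable Y0' μ := hY0.congr hY0'ae
  have hY1'iν : Integrable Y1' ν := hIntν hY1'i
  have hY0'iν : Integrable Y0' ν := hIntν hY0'i
  have hEY1 : ∫ ω, Y1' ω ∂μ = ∫ ω, Y1 ω ∂μ := (integral_congr_ae hY1'ae).symm
  have hEY0 : ∫ ω, Y0' ω ∂μ = ∫ ω, Y0 ω ∂μ := (integral_congr_ae hY0'ae).symm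
  have hc1' : IndepFun Y1' (fun ω => (Z ω, W ω)) μ := hc1.congr hY1'ae Filter.EventuallyEq.rfl
  have hc0' : IndepFun Y0' (fun ω => (Z ω, W ω)) μ := hc0.congr hY0'ae Filter.EventuallyEq.rfl
  have hd1' : CondIndepFun (MeasurableSpace.comap W inferInstance) hW.comap_le Y1' Z' ν :=
    condIndepFun_congr_left hW.comap_le ν hd1 hY1'aeν
  have hd0' : CondIndepFun (MeasurableSpace.comap W inferInstance) hW.comap_le Y0' Z' ν :=
    condIndepFun_congr_left hW.comap_le ν hd0 hY0'aeν
  -- ## the weight functions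
  set g : 𝒲 → ℝ := fun w => (π + ρ w * (1 - π))⁻¹ with hgdef
  set gE : 𝒲 → ℝ := fun w => (1 - (π + ρ w * (1 - π)))⁻¹ with hgEdef
  have hDpos : ∀ w, 0 < π + ρ w * (1 - π) := fun w => by nlinarith [(hρ01 w).1]
  have hD1 : ∀ w, π + ρ w * (1 - π) < 1 := fun w => by nlinarith [(hρ01 w).2]
  have hEpos : ∀ w, 0 < 1 - (π + ρ w * (1 - π)) := fun w => by linarith [hD1 w]
  have hgm : Measurable g := (measurable_const.add (hρmeas.mul measurable_const)).inv
  have hgEm : Measurable gE :=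
    (measurable_const.sub (measurable_const.add (hρmeas.mul measurable_const))).inv
  have hgbound : ∀ w, |g w| ≤ π⁻¹ := fun w => by
    rw [hgdef, abs_of_pos (inv_pos.2 (hDpos w))]
    exact inv_anti₀ hπ0 (by nlinarith [(hρ01 w).1])
  have hρgbound : ∀ w, |ρ w * g w| ≤ π⁻¹ := fun w => by
    rw [abs_mul]
    calc |ρ w| * |g w| ≤ 1 * π⁻¹ :=
          mul_le_mul (hρabs w) (hgbound w) (abs_nonneg _) zero_le_one
      _ = π⁻¹ := one_mul _
  have hgEpos : ∀ w, 0 < gE w := fun w => inv_pos.2 (hEpos w)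
  have hgE_id : ∀ w, (1 - ρ w) * gE w = (1 - π)⁻¹ := fun w => by
    have h1 : (0:ℝ) < 1 - ρ w := by linarith [(hρ01 w).2]
    have h2 : 1 - (π + ρ w * (1 - π)) = (1 - π) * (1 - ρ w) := by ring
    rw [hgEdef]
    show (1 - ρ w) * (1 - (π + ρ w * (1 - π)))⁻¹ = (1 - π)⁻¹
    rw [h2, mul_inv, mul_comm ((1 - π)⁻¹) _, ← mul_assoc,
      mul_inv_cancel₀ (ne_of_gt h1), one_mul]
  -- ## pointwise identities
  have hf1pt : ∀ ω, Y ω * Z' ω / (π + ρ (W ω) * (1 - π))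
      = Y1 ω * ((if Z' ω = 1 then (1:ℝ) else 0) * g (W ω)) := fun ω => by
    rcases hZ'01 ω with h | h <;>
      simp [hYdef ω, h, hgdef, div_eq_mul_inv] <;> ring
  have hf2pt : ∀ ω, Y ω * (1 - Z' ω) / (1 - (π + ρ (W ω) * (1 - π)))
      = Y0 ω * ((1 - (if Z' ω = 1 then (1:ℝ) else 0)) * gE (W ω)) := fun ω => by
    rcases hZ'01 ω with h | h <;>
      simp [hYdef ω, h, hgEdef, div_eq_mul_inv] <;> ring
  have hiteZ'm : Measurable (fun ω => if Z' ω = 1 then (1:ℝ) else 0) :=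
    Measurable.ite (hZ' (measurableSet_singleton 1)) measurable_const measurable_const
  -- ## independence splitting over μ
  have hIndepSplit : ∀ (X : Ω → ℝ), AEStronglyMeasurable X μ →
      IndepFun X (fun ω => (Z ω, W ω)) μ → ∀ (b : ℝ) (k : 𝒲 → ℝ), Measurable k →
      ∫ ω, X ω * ((if Z ω = b then (1:ℝ) else 0) * k (W ω)) ∂μ
        = (∫ ω, X ω ∂μ) * ((μ {ω | Z ω = b}).toReal * ∫ ω, k (W ω) ∂μ) := by
    intro X hXm hXind b k hk
    have hzb : Measurable (fun z : ℝ => if z = b then (1:ℝ) else 0) :=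
      Measurable.ite (measurableSet_singleton b) measurable_const measurable_const
    have hkp : Measurable (fun p : ℝ × 𝒲 => (if p.1 = b then (1:ℝ) else 0) * k p.2) :=
      (hzb.comp measurable_fst).mul (hk.comp measurable_snd)
    have h1 : IndepFun X (fun ω => (if Z ω = b then (1:ℝ) else 0) * k (W ω)) μ :=
      hXind.comp measurable_id hkp
    have h2 : IndepFun (fun ω => if Z ω = b then (1:ℝ) else 0) (fun ω => k (W ω)) μ :=
      ha.comp hzb hk
    have e1 : ∫ ω, X ω * ((if Z ω = b then (1:ℝ) else 0) * k (W ω)) ∂μ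
        = (∫ ω, X ω ∂μ) * ∫ ω, (if Z ω = b then (1:ℝ) else 0) * k (W ω) ∂μ :=
      h1.integral_mul_eq_mul_integral hXm ((hzb.comp hZ).mul (hk.comp hW)).aestronglyMeasurable
    have e2 : ∫ ω, (if Z ω = b then (1:ℝ) else 0) * k (W ω) ∂μ
        = (∫ ω, (if Z ω = b then (1:ℝ) else 0) ∂μ) * ∫ ω, k (W ω) ∂μ :=
      h2.integral_mul_eq_mul_integral (hzb.comp hZ).aestronglyMeasurable (hk.comp hW).aestronglyMeasurable
    have e3 : ∫ ω, (if Z ω = b then (1:ℝ) else 0) ∂μ = (μ {ω | Z ω = b}).toReal := by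
      have hind : (fun ω => if Z ω = b then (1:ℝ) else 0)
          = (Z ⁻¹' {b}).indicator (1 : Ω → ℝ) := by
        funext ω
        by_cases h : Z ω = b <;>
          simp [Set.indicator_apply, Set.mem_preimage, Set.mem_singleton_iff, h]
      have hset : {ω | Z ω = b} = Z ⁻¹' {b} := rfl
      rw [hind, hset, integral_indicator_one (hZ (measurableSet_singleton b)), measureReal_def]
    rw [e1, e2, e3]
  -- ## integrals over ν of products with functions of W
  have hνE : ∀ (X : Ω → ℝ), Measurable X →
      IndepFun X (fun ω => (Z ω, W ω)) μ → ∀ (k : 𝒲 → ℝ), Measurable k →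
      ∫ ω, X ω * k (W ω) ∂ν = (∫ ω, X ω ∂μ) * ∫ ω, k (W ω) ∂μ := by
    intro X hXm hXind k hk
    have h0 := hIndepSplit X hXm.aestronglyMeasurable hXind 0 k hk
    rw [← hs0def, hs0r] at h0
    have h1 : ∫ x in s0, X x * k (W x) ∂μ
        = ∫ ω, X ω * ((if Z ω = 0 then (1:ℝ) else 0) * k (W ω)) ∂μ := by
      rw [← integral_indicator hs0m]
      refine integral_congr_ae (ae_of_all _ fun ω => ?_)
      by_cases h : Z ω = 0
      · have hmem : ω ∈ s0 := h
        simp [Set.indicator_of_mem hmem, h]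
      · have hmem : ω ∉ s0 := h
        simp [Set.indicator_of_notMem hmem, h]
    have h2 := hrestrict0 (fun x => X x * k (W x))
    rw [h1, h0] at h2
    -- h2 : E[X] * ((1-π) * E[kW]) = (1-π) * ∫ X kW dν
    refine mul_left_cancel₀ h1πne ?_
    rw [← h2]; ring
  -- ## Part 1
  have hgWint : Integrable (fun ω => g (W ω)) μ :=
    (integrable_const (π⁻¹)).mono' ((hgm.comp hW).aestronglyMeasurable)
      (ae_of_all _ fun ω => by rw [Real.norm_eq_abs]; exact hgbound _)
  have hρgWint : Integrable (fun ω => ρ (W ω) * g (W ω)) μ :=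
    (integrable_const (π⁻¹)).mono' (((hρmeas.comp hW).mul (hgm.comp hW)).aestronglyMeasurable)
      (ae_of_all _ fun ω => by rw [Real.norm_eq_abs]; exact hρgbound _)
  have hcomb : π * (∫ ω, g (W ω) ∂μ) + (1 - π) * (∫ ω, ρ (W ω) * g (W ω) ∂μ) = 1 := by
    have e1 : π * (∫ ω, g (W ω) ∂μ) + (1 - π) * (∫ ω, ρ (W ω) * g (W ω) ∂μ)
        = ∫ ω, (π * g (W ω) + (1 - π) * (ρ (W ω) * g (W ω))) ∂μ := by
      rw [integral_add (hgWint.const_mul π) (hρgWint.const_mul (1 - π)),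
        integral_const_mul, integral_const_mul]
    rw [e1]
    have e2 : ∀ ω : Ω, π * g (W ω) + (1 - π) * (ρ (W ω) * g (W ω)) = 1 := fun ω => by
      have hD := hDpos (W ω)
      have : π * g (W ω) + (1 - π) * (ρ (W ω) * g (W ω))
          = (π + ρ (W ω) * (1 - π)) * (π + ρ (W ω) * (1 - π))⁻¹ := by
        rw [hgdef]; ring
      rw [this, mul_inv_cancel₀ (ne_of_gt hD)]
    rw [integral_congr_ae (ae_of_all _ e2)]
    simp
  have hiteg : ∀ ω, |(if Z' ω = 1 then (1:ℝ) else 0) * g (W ω)| ≤ π⁻¹ := fun ω => by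
    by_cases h : Z' ω = 1
    · simpa [h] using hgbound (W ω)
    · simp [h, inv_nonneg, hπ0.le]
  have hf1int : Integrable (fun ω => Y ω * Z' ω / (π + ρ (W ω) * (1 - π))) μ := by
    have hmeas : AEStronglyMeasurable
        (fun ω => Y1 ω * ((if Z' ω = 1 then (1:ℝ) else 0) * g (W ω))) μ :=
      hY1.aestronglyMeasurable.mul (hiteZ'm.mul (hgm.comp hW)).aestronglyMeasurable
    have hbig : Integrable (fun ω => Y1 ω * ((if Z' ω = 1 then (1:ℝ) else 0) * g (W ω))) μ := by
      refine Integrable.mono' (hY1.abs.mul_const π⁻¹) hmeas (ae_of_all _ fun ω => ?_)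
      rw [Real.norm_eq_abs, abs_mul]
      exact mul_le_mul_of_nonneg_left (hiteg ω) (abs_nonneg _)
    exact hbig.congr (ae_of_all _ fun ω => (hf1pt ω).symm)
  have hA1 : ∫ x in s1, Y x * Z' x / (π + ρ (W x) * (1 - π)) ∂μ
      = ∫ ω, Y1' ω * ((if Z ω = 1 then (1:ℝ) else 0) * g (W ω)) ∂μ := by
    have hae1 : ∀ᵐ ω ∂μ.restrict s1, Y ω * Z' ω / (π + ρ (W ω) * (1 - π))
        = Y1' ω * ((if Z ω = 1 then (1:ℝ) else 0) * g (W ω)) := by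
      filter_upwards [ae_restrict_mem hs1m, ae_restrict_of_ae hb, ae_restrict_of_ae hY1'ae]
        with ω h1 h2 h3
      have hz1 : Z ω = 1 := h1
      have hz'1 : Z' ω = 1 := h2 h1
      rw [hf1pt ω, h3]
      simp [hz'1, hz1]
    rw [integral_congr_ae hae1]
    rw [← integral_indicator hs1m]
    refine integral_congr_ae (ae_of_all _ fun ω => ?_)
    by_cases h : ω ∈ s1
    · have hz : Z ω = 1 := h
      simp [Set.indicator_of_mem h, hz]
    · have hz : ¬ (Z ω = 1) := h
      simp [Set.indicator_of_notMem h, hz]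
  have hA2 : ∫ ω, Y1' ω * ((if Z ω = 1 then (1:ℝ) else 0) * g (W ω)) ∂μ
      = (∫ ω, Y1' ω ∂μ) * (π * ∫ ω, g (W ω) ∂μ) := by
    have := hIndepSplit Y1' hY1'm.aestronglyMeasurable hc1' 1 g hgm
    rw [← hs1def, hs1r] at this
    exact this
  have hB2 : ∫ ω, Y ω * Z' ω / (π + ρ (W ω) * (1 - π)) ∂ν
      = ∫ ω, Y1' ω * ((if Z' ω = 1 then (1:ℝ) else 0) * g (W ω)) ∂ν := by
    refine integral_congr_ae ?_
    filter_upwards [hY1'aeν] with ω h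
    rw [hf1pt ω, h]
  have hB3 : ∫ ω, Y1' ω * ((if Z' ω = 1 then (1:ℝ) else 0) * g (W ω)) ∂ν
      = ∫ ω, Y1' ω * (ρ (W ω) * g (W ω)) ∂ν :=
    key_cond_integral hW.comap_le ν (fun s hs => ⟨s, hs, rfl⟩) hY1'm hY1'iν hZ'
      hd1' hρmeas hρabs hdρ hgm π⁻¹ hgbound
  have hB4 : ∫ ω, Y1' ω * (ρ (W ω) * g (W ω)) ∂ν
      = (∫ ω, Y1' ω ∂μ) * ∫ ω, ρ (W ω) * g (W ω) ∂μ :=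
    hνE Y1' hY1'm hc1' (fun w => ρ w * g w) (hρmeas.mul hgm)
  have P1 : ∫ ω, Y ω * Z' ω / (π + ρ (W ω) * (1 - π)) ∂μ = ∫ ω, Y1 ω ∂μ := by
    have hsplit := integral_add_compl hs1m hf1int
    rw [← hs0eq] at hsplit
    rw [← hsplit, hA1, hA2, hrestrict0, hB2, hB3, hB4, ← hEY1]
    calc (∫ ω, Y1' ω ∂μ) * (π * ∫ ω, g (W ω) ∂μ)
          + (1 - π) * ((∫ ω, Y1' ω ∂μ) * ∫ ω, ρ (W ω) * g (W ω) ∂μ)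
        = (∫ ω, Y1' ω ∂μ)
            * (π * (∫ ω, g (W ω) ∂μ) + (1 - π) * (∫ ω, ρ (W ω) * g (W ω) ∂μ)) := by ring
      _ = ∫ ω, Y1' ω ∂μ := by rw [hcomb, mul_one]
  -- ## Part 2
  have h1ite : ∀ ω, 0 ≤ 1 - (if Z' ω = 1 then (1:ℝ) else 0) := fun ω => by
    by_cases h : Z' ω = 1 <;> simp [h]
  have h1ite1 : ∀ ω, 1 - (if Z' ω = 1 then (1:ℝ) else 0) ≤ 1 := fun ω => by
    by_cases h : Z' ω = 1 <;> simp [h]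
  have hgnb : ∀ (n : ℕ) (w : 𝒲), |min (gE w) (n:ℝ)| ≤ (n:ℝ) := fun n w => by
    rw [abs_of_nonneg (le_min (hgEpos w).le (Nat.cast_nonneg n))]
    exact min_le_right _ _
  have hgnnn : ∀ (n : ℕ) (w : 𝒲), 0 ≤ min (gE w) (n:ℝ) := fun n w =>
    le_min (hgEpos w).le (Nat.cast_nonneg n)
  have hkeyn : ∀ (X : Ω → ℝ), Measurable X → Integrable X ν →
      CondIndepFun (MeasurableSpace.comap W inferInstance) hW.comap_le X Z' ν → ∀ n : ℕ,
      ∫ ω, X ω * ((1 - (if Z' ω = 1 then (1:ℝ) else 0)) * min (gE (W ω)) (n:ℝ)) ∂ν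
        = ∫ ω, X ω * ((1 - ρ (W ω)) * min (gE (W ω)) (n:ℝ)) ∂ν := by
    intro X hXm hXi hind n
    have hgnm : Measurable (fun w => min (gE w) (n:ℝ)) := hgEm.min measurable_const
    have h1 := key_cond_integral hW.comap_le ν (fun s hs => ⟨s, hs, rfl⟩) hXm hXi hZ'
      hind hρmeas hρabs hdρ hgnm (n:ℝ) (hgnb n)
    have hI0 : Integrable (fun ω => X ω * min (gE (W ω)) (n:ℝ)) ν := by
      refine ((hXi.bdd_mul (c := (n:ℝ)) ((hgnm.comp hW).aestronglyMeasurable)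
        (ae_of_all _ fun ω => ?_)).congr (ae_of_all _ fun ω => mul_comm _ _))
      rw [Real.norm_eq_abs]; exact hgnb n _
    have hI1 : Integrable
        (fun ω => X ω * ((if Z' ω = 1 then (1:ℝ) else 0) * min (gE (W ω)) (n:ℝ))) ν := by
      refine ((hXi.bdd_mul (c := (n:ℝ)) ((hiteZ'm.mul (hgnm.comp hW)).aestronglyMeasurable)
        (ae_of_all _ fun ω => ?_)).congr (ae_of_all _ fun ω => mul_comm _ _))
      rw [Pi.mul_apply, Real.norm_eq_abs, abs_mul]
      by_cases h : Z' ω = 1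
      · simpa [h] using hgnb n (W ω)
      · simp [h, Nat.cast_nonneg]
    have hI2 : Integrable (fun ω => X ω * (ρ (W ω) * min (gE (W ω)) (n:ℝ))) ν := by
      refine ((hXi.bdd_mul (c := (n:ℝ)) (((hρmeas.comp hW).mul (hgnm.comp hW)).aestronglyMeasurable)
        (ae_of_all _ fun ω => ?_)).congr (ae_of_all _ fun ω => mul_comm _ _))
      rw [Pi.mul_apply, Real.norm_eq_abs, abs_mul]
      calc |ρ (W ω)| * |min (gE (W ω)) (n:ℝ)| ≤ 1 * (n:ℝ) :=
            mul_le_mul (hρabs _) (hgnb n _) (abs_nonneg _) zero_le_one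
        _ = (n:ℝ) := one_mul _
    calc ∫ ω, X ω * ((1 - (if Z' ω = 1 then (1:ℝ) else 0)) * min (gE (W ω)) (n:ℝ)) ∂ν
        = ∫ ω, (X ω * min (gE (W ω)) (n:ℝ)
            - X ω * ((if Z' ω = 1 then (1:ℝ) else 0) * min (gE (W ω)) (n:ℝ))) ∂ν := by
          refine integral_congr_ae (ae_of_all _ fun ω => ?_); ring
      _ = (∫ ω, X ω * min (gE (W ω)) (n:ℝ) ∂ν)
            - ∫ ω, X ω * ((if Z' ω = 1 then (1:ℝ) else 0) * min (gE (W ω)) (n:ℝ)) ∂ν :=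
          integral_sub hI0 hI1
      _ = (∫ ω, X ω * min (gE (W ω)) (n:ℝ) ∂ν)
            - ∫ ω, X ω * (ρ (W ω) * min (gE (W ω)) (n:ℝ)) ∂ν := by rw [h1]
      _ = ∫ ω, (X ω * min (gE (W ω)) (n:ℝ)
            - X ω * (ρ (W ω) * min (gE (W ω)) (n:ℝ))) ∂ν := (integral_sub hI0 hI2).symm
      _ = ∫ ω, X ω * ((1 - ρ (W ω)) * min (gE (W ω)) (n:ℝ)) ∂ν := by
          refine integral_congr_ae (ae_of_all _ fun ω => ?_); ring
  -- integrability of the absolute dominating function, by monotone convergence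
  have hGabs_int : ∀ n : ℕ, Integrable
      (fun ω => |Y0' ω| * ((1 - (if Z' ω = 1 then (1:ℝ) else 0)) * min (gE (W ω)) (n:ℝ))) ν := by
    intro n
    have hgnm : Measurable (fun w => min (gE w) (n:ℝ)) := hgEm.min measurable_const
    refine ((hY0'iν.abs.bdd_mul (c := (n:ℝ))
      (((measurable_const.sub hiteZ'm).mul (hgnm.comp hW)).aestronglyMeasurable)
      (ae_of_all _ fun ω => ?_)).congr (ae_of_all _ fun ω => mul_comm _ _))
    simp only [Function.comp_apply, Pi.mul_apply, Pi.sub_apply, Pi.one_apply]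
    rw [Real.norm_eq_abs, abs_mul, abs_of_nonneg (h1ite ω),
      abs_of_nonneg (hgnnn n (W ω))]
    calc (1 - (if Z' ω = 1 then (1:ℝ) else 0)) * min (gE (W ω)) (n:ℝ)
        ≤ 1 * (n:ℝ) := mul_le_mul (h1ite1 ω) (min_le_right _ _) (hgnnn n _) zero_le_one
      _ = (n:ℝ) := one_mul _
  have hGabs_nn : ∀ (n : ℕ) ω,
      0 ≤ |Y0' ω| * ((1 - (if Z' ω = 1 then (1:ℝ) else 0)) * min (gE (W ω)) (n:ℝ)) :=
    fun n ω => mul_nonneg (abs_nonneg _) (mul_nonneg (h1ite ω) (hgnnn n _))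
  have hd0abs : CondIndepFun (MeasurableSpace.comap W inferInstance) hW.comap_le
      (fun ω => |Y0' ω|) Z' ν := hd0'.comp measurable_abs measurable_id
  have hGabs_le : ∀ n : ℕ,
      ∫ ω, |Y0' ω| * ((1 - (if Z' ω = 1 then (1:ℝ) else 0)) * min (gE (W ω)) (n:ℝ)) ∂ν
        ≤ (∫ ω, |Y0' ω| ∂ν) * (1 - π)⁻¹ := by
    intro n
    rw [hkeyn (fun ω => |Y0' ω|) hY0'm.abs hY0'iν.abs hd0abs n]
    have hmono : ∀ ω, |Y0' ω| * ((1 - ρ (W ω)) * min (gE (W ω)) (n:ℝ))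
        ≤ |Y0' ω| * (1 - π)⁻¹ := fun ω => by
      refine mul_le_mul_of_nonneg_left ?_ (abs_nonneg _)
      have h1ρ : (0:ℝ) ≤ 1 - ρ (W ω) := by linarith [(hρ01 (W ω)).2]
      calc (1 - ρ (W ω)) * min (gE (W ω)) (n:ℝ) ≤ (1 - ρ (W ω)) * gE (W ω) :=
            mul_le_mul_of_nonneg_left (min_le_left _ _) h1ρ
        _ = (1 - π)⁻¹ := hgE_id (W ω)
    have hgnm : Measurable (fun w => min (gE w) (n:ℝ)) := hgEm.min measurable_const
    have hintL : Integrable (fun ω => |Y0' ω| * ((1 - ρ (W ω)) * min (gE (W ω)) (n:ℝ))) ν := by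
      refine ((hY0'iν.abs.bdd_mul (c := (n:ℝ))
        ((((measurable_const.sub (hρmeas.comp hW))).mul (hgnm.comp hW)).aestronglyMeasurable)
        (ae_of_all _ fun ω => ?_)).congr (ae_of_all _ fun ω => mul_comm _ _))
      simp only [Function.comp_apply, Pi.mul_apply, Pi.sub_apply, Pi.one_apply]
      rw [Real.norm_eq_abs, abs_mul]
      have h1ρ : (0:ℝ) ≤ 1 - ρ (W ω) := by linarith [(hρ01 (W ω)).2]
      have h1ρ1 : |1 - ρ (W ω)| ≤ 1 := by
        rw [abs_of_nonneg h1ρ]; linarith [(hρ01 (W ω)).1]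
      calc |1 - ρ (W ω)| * |min (gE (W ω)) (n:ℝ)| ≤ 1 * (n:ℝ) :=
            mul_le_mul h1ρ1 (hgnb n _) (abs_nonneg _) zero_le_one
        _ = (n:ℝ) := one_mul _
    calc ∫ ω, |Y0' ω| * ((1 - ρ (W ω)) * min (gE (W ω)) (n:ℝ)) ∂ν
        ≤ ∫ ω, |Y0' ω| * (1 - π)⁻¹ ∂ν :=
          integral_mono hintL (hY0'iν.abs.mul_const _) hmono
      _ = (∫ ω, |Y0' ω| ∂ν) * (1 - π)⁻¹ := integral_mul_const _ _
  have hFabs_meas : Measurable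
      (fun ω => |Y0' ω| * ((1 - (if Z' ω = 1 then (1:ℝ) else 0)) * gE (W ω))) :=
    hY0'm.abs.mul ((measurable_const.sub hiteZ'm).mul (hgEm.comp hW))
  have hFabs_nn : ∀ ω,
      0 ≤ |Y0' ω| * ((1 - (if Z' ω = 1 then (1:ℝ) else 0)) * gE (W ω)) :=
    fun ω => mul_nonneg (abs_nonneg _) (mul_nonneg (h1ite ω) (hgEpos _).le)
  have hmin_mono : ∀ (ω : Ω), Monotone (fun n : ℕ => min (gE (W ω)) (n:ℝ)) :=
    fun ω i j hij => min_le_min le_rfl (Nat.cast_le.mpr hij)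
  have hmin_event : ∀ (w : 𝒲) (n : ℕ), ⌈gE w⌉₊ ≤ n → min (gE w) (n:ℝ) = gE w :=
    fun w n hn => min_eq_left ((Nat.le_ceil _).trans (Nat.cast_le.mpr hn))
  have hFabs_int : Integrable
      (fun ω => |Y0' ω| * ((1 - (if Z' ω = 1 then (1:ℝ) else 0)) * gE (W ω))) ν := by
    refine ⟨hFabs_meas.aestronglyMeasurable, ?_⟩
    rw [hasFiniteIntegral_iff_norm]
    have hptsup : ∀ ω, ENNReal.ofReal
        ‖|Y0' ω| * ((1 - (if Z' ω = 1 then (1:ℝ) else 0)) * gE (W ω))‖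
        = ⨆ n : ℕ, ENNReal.ofReal
          (|Y0' ω| * ((1 - (if Z' ω = 1 then (1:ℝ) else 0)) * min (gE (W ω)) (n:ℝ))) := by
      intro ω
      rw [Real.norm_eq_abs, abs_of_nonneg (hFabs_nn ω)]
      refine le_antisymm ?_ ?_
      · refine le_iSup_of_le ⌈gE (W ω)⌉₊ (le_of_eq ?_)
        rw [hmin_event (W ω) _ le_rfl]
      · refine iSup_le fun n => ENNReal.ofReal_le_ofReal ?_
        refine mul_le_mul_of_nonneg_left ?_ (abs_nonneg _)
        exact mul_le_mul_of_nonneg_left (min_le_left _ _) (h1ite ω)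
    calc ∫⁻ ω, ENNReal.ofReal
          ‖|Y0' ω| * ((1 - (if Z' ω = 1 then (1:ℝ) else 0)) * gE (W ω))‖ ∂ν
        = ∫⁻ ω, ⨆ n : ℕ, ENNReal.ofReal
          (|Y0' ω| * ((1 - (if Z' ω = 1 then (1:ℝ) else 0)) * min (gE (W ω)) (n:ℝ))) ∂ν :=
          lintegral_congr hptsup
      _ = ⨆ n : ℕ, ∫⁻ ω, ENNReal.ofReal
          (|Y0' ω| * ((1 - (if Z' ω = 1 then (1:ℝ) else 0)) * min (gE (W ω)) (n:ℝ))) ∂ν := by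
          refine lintegral_iSup (fun n => ?_) (fun i j hij ω => ENNReal.ofReal_le_ofReal ?_)
          · exact (hY0'm.abs.mul ((measurable_const.sub hiteZ'm).mul
              ((hgEm.min measurable_const).comp hW))).ennreal_ofReal
          · exact mul_le_mul_of_nonneg_left
              (mul_le_mul_of_nonneg_left (hmin_mono ω hij) (h1ite ω)) (abs_nonneg _)
      _ ≤ ENNReal.ofReal ((∫ ω, |Y0' ω| ∂ν) * (1 - π)⁻¹) := by
          refine iSup_le fun n => ?_
          rw [← ofReal_integral_eq_lintegral_ofReal (hGabs_int n) (ae_of_all _ (hGabs_nn n))]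
          exact ENNReal.ofReal_le_ofReal (hGabs_le n)
      _ < ⊤ := ENNReal.ofReal_lt_top
  have hFmeas : Measurable
      (fun ω => Y0' ω * ((1 - (if Z' ω = 1 then (1:ℝ) else 0)) * gE (W ω))) :=
    hY0'm.mul ((measurable_const.sub hiteZ'm).mul (hgEm.comp hW))
  have hFint : Integrable
      (fun ω => Y0' ω * ((1 - (if Z' ω = 1 then (1:ℝ) else 0)) * gE (W ω))) ν := by
    refine hFabs_int.mono' hFmeas.aestronglyMeasurable (ae_of_all _ fun ω => ?_)
    rw [Real.norm_eq_abs, abs_mul, abs_of_nonneg (mul_nonneg (h1ite ω) (hgEpos _).le)]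
  have hDCT1 : Filter.Tendsto
      (fun n : ℕ => ∫ ω, Y0' ω
        * ((1 - (if Z' ω = 1 then (1:ℝ) else 0)) * min (gE (W ω)) (n:ℝ)) ∂ν)
      Filter.atTop
      (nhds (∫ ω, Y0' ω * ((1 - (if Z' ω = 1 then (1:ℝ) else 0)) * gE (W ω)) ∂ν)) := by
    refine tendsto_integral_of_dominated_convergence
      (fun ω => |Y0' ω| * ((1 - (if Z' ω = 1 then (1:ℝ) else 0)) * gE (W ω)))
      (fun n => (hY0'm.mul ((measurable_const.sub hiteZ'm).mul
        ((hgEm.min measurable_const).comp hW))).aestronglyMeasurable)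
      hFabs_int (fun n => ae_of_all _ fun ω => ?_) (ae_of_all _ fun ω => ?_)
    · rw [Real.norm_eq_abs, abs_mul, abs_of_nonneg (mul_nonneg (h1ite ω) (hgnnn n _))]
      exact mul_le_mul_of_nonneg_left
        (mul_le_mul_of_nonneg_left (min_le_left _ _) (h1ite ω)) (abs_nonneg _)
    · refine tendsto_atTop_of_eventually_const (i₀ := ⌈gE (W ω)⌉₊) fun n hn => ?_
      rw [hmin_event (W ω) n hn]
  have hDCT2 : Filter.Tendsto
      (fun n : ℕ => ∫ ω, Y0' ω * ((1 - ρ (W ω)) * min (gE (W ω)) (n:ℝ)) ∂ν)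
      Filter.atTop (nhds (∫ ω, Y0' ω * (1 - π)⁻¹ ∂ν)) := by
    refine tendsto_integral_of_dominated_convergence
      (fun ω => |Y0' ω| * (1 - π)⁻¹)
      (fun n => (hY0'm.mul ((measurable_const.sub (hρmeas.comp hW)).mul
        ((hgEm.min measurable_const).comp hW))).aestronglyMeasurable)
      (hY0'iν.abs.mul_const _) (fun n => ae_of_all _ fun ω => ?_) (ae_of_all _ fun ω => ?_)
    · have h1ρ : (0:ℝ) ≤ 1 - ρ (W ω) := by linarith [(hρ01 (W ω)).2]
      rw [Real.norm_eq_abs, abs_mul, abs_of_nonneg (mul_nonneg h1ρ (hgnnn n _))]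
      refine mul_le_mul_of_nonneg_left ?_ (abs_nonneg _)
      calc (1 - ρ (W ω)) * min (gE (W ω)) (n:ℝ) ≤ (1 - ρ (W ω)) * gE (W ω) :=
            mul_le_mul_of_nonneg_left (min_le_left _ _) h1ρ
        _ = (1 - π)⁻¹ := hgE_id (W ω)
    · refine tendsto_atTop_of_eventually_const (i₀ := ⌈gE (W ω)⌉₊) fun n hn => ?_
      rw [hmin_event (W ω) n hn, hgE_id (W ω)]
  have hseq : (fun n : ℕ => ∫ ω, Y0' ω
        * ((1 - (if Z' ω = 1 then (1:ℝ) else 0)) * min (gE (W ω)) (n:ℝ)) ∂ν)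
      = (fun n : ℕ => ∫ ω, Y0' ω * ((1 - ρ (W ω)) * min (gE (W ω)) (n:ℝ)) ∂ν) :=
    funext (hkeyn Y0' hY0'm hY0'iν hd0')
  rw [hseq] at hDCT1
  have hFG : ∫ ω, Y0' ω * ((1 - (if Z' ω = 1 then (1:ℝ) else 0)) * gE (W ω)) ∂ν
      = ∫ ω, Y0' ω * (1 - π)⁻¹ ∂ν := tendsto_nhds_unique hDCT1 hDCT2
  have hY0ν : ∫ ω, Y0' ω ∂ν = ∫ ω, Y0' ω ∂μ := by
    have := hνE Y0' hY0'm hc0' (fun _ => (1:ℝ)) measurable_const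
    simpa using this
  have hFval : ∫ ω, Y0' ω * ((1 - (if Z' ω = 1 then (1:ℝ) else 0)) * gE (W ω)) ∂ν
      = (∫ ω, Y0 ω ∂μ) * (1 - π)⁻¹ := by
    rw [hFG, integral_mul_const, hY0ν, hEY0]
  have hf2ν : (fun ω => Y ω * (1 - Z' ω) / (1 - (π + ρ (W ω) * (1 - π))))
      =ᵐ[ν] (fun ω => Y0' ω * ((1 - (if Z' ω = 1 then (1:ℝ) else 0)) * gE (W ω))) := by
    filter_upwards [hY0'aeν] with ω h
    rw [hf2pt ω, h]
  have hf2intν : Integrable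
      (fun ω => Y ω * (1 - Z' ω) / (1 - (π + ρ (W ω) * (1 - π)))) ν :=
    hFint.congr hf2ν.symm
  have hz1 : ∀ᵐ ω ∂μ.restrict s1,
      Y ω * (1 - Z' ω) / (1 - (π + ρ (W ω) * (1 - π))) = 0 := by
    filter_upwards [ae_restrict_mem hs1m, ae_restrict_of_ae hb] with ω h1 h2
    have hz'1 : Z' ω = 1 := h2 h1
    rw [hz'1]
    simp
  have hf2int : Integrable
      (fun ω => Y ω * (1 - Z' ω) / (1 - (π + ρ (W ω) * (1 - π)))) μ := by
    have hOn0 : IntegrableOn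
        (fun ω => Y ω * (1 - Z' ω) / (1 - (π + ρ (W ω) * (1 - π)))) s0 μ := by
      rw [IntegrableOn, hresteq]
      exact hf2intν.smul_measure hs0fin
    have hOn1 : IntegrableOn
        (fun ω => Y ω * (1 - Z' ω) / (1 - (π + ρ (W ω) * (1 - π)))) s1 μ :=
      (integrable_zero _ _ _).congr (hz1.mono fun ω h => h.symm)
    have hU := hOn1.union hOn0
    rw [hs0eq, Set.union_compl_self] at hU
    exact integrableOn_univ.mp hU
  have P2 : ∫ ω, Y ω * (1 - Z' ω) / (1 - (π + ρ (W ω) * (1 - π))) ∂μ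
      = ∫ ω, Y0 ω ∂μ := by
    have hsplit := integral_add_compl hs1m hf2int
    rw [← hs0eq] at hsplit
    rw [← hsplit, integral_congr_ae hz1, integral_zero, zero_add, hrestrict0,
      integral_congr_ae hf2ν, hFval, ← mul_assoc, mul_comm (1 - π) _, mul_assoc,
      mul_inv_cancel₀ h1πne, mul_one]
  exact ⟨P1, P2, by rw [integral_sub hf1int hf2int, P1, P2]⟩
end
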